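/- arXiv:2511.10398 — 5 statements merged into one kernel-verified Lean document; each statement's English description precedes it below -/
import Mathlib

section
/- Analytic core of Theorem 1.3 (second variation argument): Let V, U : ℝ² → ℝ be smooth with V > 0 everywhere, let a, b ∈ ℝ² with a ≠ b, let ε₀ > 0, and let Γ : (−ε₀,ε₀) × [0,1] → ℝ² be smooth with Γ(ε,0) = a and Γ(ε,1) = b for all ε; write γ_ε := Γ(ε,·). Assume: (i) for each ε ∈ (−ε₀,ε₀), γ_ε is a critical point of E_ε with fixed endpoints; (ii) γ₀ minimizes E⁰ among all smooth curves ω : [0,1] → ℝ² with ω(0) = a and ω(1) = b; (iii) the function ε ↦ E_ε(γ_ε) is constant on (−ε₀,ε₀). Then U(γ₀(t)) = 0 for every t ∈ [0,1]. -/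
noncomputable section

open Set

/-- The Euclidean plane ℝ². -/
abbrev E2 := EuclideanSpace ℝ (Fin 2)

/-- The point of ℝ² with coordinates `(a, b)`. -/
def vec2 (a b : ℝ) : E2 := (WithLp.equiv 2 (Fin 2 → ℝ)).symm ![a, b]

/-- The lattice vector `(m, n) ∈ ℤ² ⊆ ℝ²`. -/
def latt (m n : ℤ) : E2 := vec2 (m : ℝ) (n : ℝ)

/-- A function on ℝ² is ℤ²-periodic if it is invariant under all lattice translations. -/
def ZZPeriodic (f : E2 → ℝ) : Prop := ∀ (x : E2) (m n : ℤ), f (x + latt m n) = f x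

/-- A map ℝ² → ℝ² is ℤ²-periodic if it is invariant under all lattice translations. -/
def ZZPeriodicMap (s : E2 → E2) : Prop := ∀ (x : E2) (m n : ℤ), s (x + latt m n) = s x

/-- γ is a conformal geodesic for `W` on the set `I`:
`(1/2)|γ'|² ∇W(γ) = (γ'·∇W(γ)) γ' + W(γ) γ''` on `I`. -/
def IsConformalGeodesicOn (W : E2 → ℝ) (γ : ℝ → E2) (I : Set ℝ) : Prop :=
  ∀ t ∈ I, ((1/2) * ‖deriv γ t‖^2) • gradient W (γ t)
    = (inner ℝ (deriv γ t) (gradient W (γ t)) : ℝ) • deriv γ t + W (γ t) • deriv (deriv γ) t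

/-- γ is unit speed for the conformal metric `W(x)(dx₁²+dx₂²)` on the set `I`. -/
def IsUnitSpeedOn (W : E2 → ℝ) (γ : ℝ → E2) (I : Set ℝ) : Prop :=
  ∀ t ∈ I, W (γ t) * ‖deriv γ t‖^2 = 1

/-- A closed geodesic of homology class `(m,n)` with period `T` for the conformal factor `W`. -/
def IsClosedGeodesic (W : E2 → ℝ) (m n : ℤ) (T : ℝ) (γ : ℝ → E2) : Prop :=
  ContDiff ℝ (⊤ : ℕ∞) γ ∧ IsConformalGeodesicOn W γ univ ∧ IsUnitSpeedOn W γ univ ∧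
    0 < T ∧ ∀ t, γ (t + T) = γ t + latt m n

/-- The (m,n)-length spectrum: the set of periods of closed geodesics of homology class (m,n). -/
def lengthSpec (W : E2 → ℝ) (m n : ℤ) : Set ℝ := {T | ∃ γ, IsClosedGeodesic W m n T γ}

/-- The oscillatory length spectrum. -/
def oscSpec (W : E2 → ℝ) : Set ℝ :=
  ⋃ (m : ℤ) (n : ℤ) (_ : (m, n) ≠ (0, 0)) (_ : m * n = 0), lengthSpec W m n

/-- The rotational length spectrum. -/
def rotSpec (W : E2 → ℝ) : Set ℝ :=
  ⋃ (m : ℤ) (n : ℤ) (_ : m * n ≠ 0), lengthSpec W m n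

/-- The minimal length spectrum. -/
def minSpec (W : E2 → ℝ) : Set ℝ :=
  ⋃ (m : ℤ) (n : ℤ) (_ : m * n ≠ 0), {sInf (lengthSpec W m n)}

/-- The noncoincidence condition on a set `I ⊆ ℝ`. -/
def NCC (W : E2 → ℝ) (I : Set ℝ) : Prop := minSpec W ∩ oscSpec W ∩ I = ∅

/-- A rational torus of homology class `(m,n)` with period `T` for `W`. -/
def IsRationalTorus (W : E2 → ℝ) (m n : ℤ) (T : ℝ) (s : E2 → E2) : Prop :=
  0 < T ∧ Continuous s ∧ ZZPeriodicMap s ∧ (∀ x, W x * ‖s x‖^2 = 1) ∧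
    ∀ x : E2, ∃ γ : ℝ → E2, ContDiff ℝ (⊤ : ℕ∞) γ ∧ IsConformalGeodesicOn W γ univ ∧
      IsUnitSpeedOn W γ univ ∧ γ 0 = x ∧ (∀ t, deriv γ t = s (γ t)) ∧ γ T = x + latt m n

/-- Rational integrability (up to T₀ = ∞). -/
def RationallyIntegrable (W : E2 → ℝ) : Prop :=
  ∀ m n : ℤ, m * n ≠ 0 → ∀ T γ, IsClosedGeodesic W m n T γ →
    ∃ T' s, IsRationalTorus W m n T' s ∧ ∀ t, deriv γ t = s (γ t)

/-- Rational integrability up to a finite time T₀. -/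
def RationallyIntegrableUpTo (W : E2 → ℝ) (T₀ : ℝ) : Prop :=
  ∀ m n : ℤ, m * n ≠ 0 → ∀ T γ, IsClosedGeodesic W m n T γ → T < T₀ →
    ∃ T' s, IsRationalTorus W m n T' s ∧ ∀ t, deriv γ t = s (γ t)

/-- Directional (partial) derivative of a function on ℝ² in the direction `v`. -/
def pd (v : E2) (u : E2 → ℝ) : E2 → ℝ := fun x => deriv (fun r : ℝ => u (x + r • v)) 0

/-- The Laplace spectrum of the conformal torus metric `W(x)(dx₁²+dx₂²)`:
λ is in the spectrum iff `Δu + λWu = 0` has a nontrivial smooth ℤ²-periodic solution. -/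
def LaplaceSpec (W : E2 → ℝ) : Set ℝ :=
  {lam : ℝ | ∃ u : E2 → ℝ, ContDiff ℝ (⊤ : ℕ∞) u ∧ ZZPeriodic u ∧ u ≠ 0 ∧
    ∀ x, pd (latt 1 0) (pd (latt 1 0) u) x + pd (latt 0 1) (pd (latt 0 1) u) x
      + lam * W x * u x = 0}

/-- The family `ε ↦ W_ε` is continuous in ε with respect to the C¹ norm. -/
def C1ContinuousFamily (W : ℝ → E2 → ℝ) : Prop :=
  ∀ ε₀ : ℝ, ∀ η > (0:ℝ), ∃ δ > (0:ℝ), ∀ ε, |ε - ε₀| < δ →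
    ∀ x : E2, |W ε x - W ε₀ x| ≤ η ∧ ‖gradient (W ε) x - gradient (W ε₀) x‖ ≤ η

/-- The energy `E_ε(ω) = ∫₀¹ (V(ω)+εU(ω))|ω'|² dt` of a curve. -/
def energy (V U : E2 → ℝ) (ε : ℝ) (ω : ℝ → E2) : ℝ :=
  ∫ t in (0:ℝ)..1, (V (ω t) + ε * U (ω t)) * ‖deriv ω t‖^2

/-- The first-order energy functional `E¹(ω) = ∫₀¹ U(ω)|ω'|² dt`. -/
def energy1 (U : E2 → ℝ) (ω : ℝ → E2) : ℝ :=
  ∫ t in (0:ℝ)..1, U (ω t) * ‖deriv ω t‖^2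

/-- γ is a critical point of `E_ε` with fixed endpoints. -/
def IsCritical (V U : E2 → ℝ) (ε : ℝ) (γ : ℝ → E2) : Prop :=
  ∀ δ : ℝ → E2, ContDiff ℝ (⊤ : ℕ∞) δ → δ 0 = 0 → δ 1 = 0 →
    deriv (fun s : ℝ => energy V U ε (fun t => γ t + s • δ t)) 0 = 0

open MeasureTheory intervalIntegral Filter in
lemma DUI (F : ℝ → ℝ → ℝ) (hF : ContDiff ℝ (⊤ : ℕ∞) (fun p : ℝ × ℝ => F p.1 p.2)) (s₀ : ℝ) :
    HasDerivAt (fun s => ∫ t in (0:ℝ)..1, F s t)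
      (∫ t in (0:ℝ)..1, deriv (fun s => F s t) s₀) s₀ := by
  have hGd : Differentiable ℝ (fun p : ℝ × ℝ => F p.1 p.2) := hF.differentiable (by simp)
  set F' : ℝ → ℝ → ℝ :=
    fun s t => fderiv ℝ (fun p : ℝ × ℝ => F p.1 p.2) (s, t) (1, 0) with hF'def
  have key : ∀ s t, HasDerivAt (fun s => F s t) (F' s t) s := by
    intro s t
    have h1 : HasDerivAt (fun s : ℝ => (s, t)) ((1:ℝ), (0:ℝ)) s :=
      (hasDerivAt_id s).prodMk (hasDerivAt_const s t)
    exact (hGd (s, t)).hasFDerivAt.comp_hasDerivAt s h1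
  have hF'c : Continuous (fun p : ℝ × ℝ => F' p.1 p.2) :=
    ((hF.fderiv_right (m := (⊤ : ℕ∞)) (by simp)).continuous.clm_apply continuous_const)
  obtain ⟨C, hC⟩ := (isCompact_Icc (a := (s₀ - 1, (0:ℝ))) (b := (s₀ + 1, 1))).exists_bound_of_continuousOn hF'c.continuousOn
  have cont_slice : ∀ s, Continuous (F s) := by
    intro s
    exact hF.continuous.comp (continuous_const.prodMk continuous_id)
  have main := intervalIntegral.hasDerivAt_integral_of_dominated_loc_of_deriv_le
    (F := F) (F' := F') (x₀ := s₀) (a := (0:ℝ)) (b := 1) (μ := volume)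
    (bound := fun _ => C) (Metric.ball_mem_nhds s₀ one_pos)
    (Filter.Eventually.of_forall fun s => (cont_slice s).aestronglyMeasurable)
    ((cont_slice s₀).intervalIntegrable 0 1)
    ((hF'c.comp (continuous_const.prodMk continuous_id)).aestronglyMeasurable)
    ?_ (intervalIntegrable_const) ?_
  · have : (fun t => deriv (fun s => F s t) s₀) = fun t => F' s₀ t :=
      funext fun t => (key s₀ t).deriv
    rw [this]
    exact main.2
  · refine Filter.Eventually.of_forall fun t ht s hs => ?_
    refine hC (s, t) ?_
    have hs' := abs_lt.1 (by simpa [Real.dist_eq] using mem_ball_iff_norm.1 hs)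
    have ht' := (uIoc_of_le (by norm_num : (0:ℝ) ≤ 1) ▸ ht)
    simp only [mem_Icc, Prod.mk_le_mk] at *
    exact ⟨⟨by linarith [hs'.1], le_of_lt ht'.1⟩, ⟨by linarith [hs'.2], ht'.2⟩⟩
  · exact Filter.Eventually.of_forall fun t _ s _ => key s t

section helpers
open MeasureTheory intervalIntegral Filter
lemma contDiff_deriv {F : Type*} [NormedAddCommGroup F] [NormedSpace ℝ F]
    (f : ℝ → F) (hf : ContDiff ℝ (⊤ : ℕ∞) f) : ContDiff ℝ (⊤ : ℕ∞) (deriv f) := by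
  have h : deriv f = fun t => fderiv ℝ f t 1 := by
    funext t; exact (fderiv_apply_one_eq_deriv).symm
  rw [h]
  exact (hf.fderiv_right (by simp)).clm_apply contDiff_const

lemma first_var (W : E2 → ℝ) (hW : ContDiff ℝ (⊤ : ℕ∞) W) (γ δ : ℝ → E2)
    (hγ : ContDiff ℝ (⊤ : ℕ∞) γ) (hδ : ContDiff ℝ (⊤ : ℕ∞) δ) :
    HasDerivAt (fun s : ℝ => ∫ t in (0:ℝ)..1, W (γ t + s • δ t) * ‖deriv γ t + s • deriv δ t‖^2)
      (∫ t in (0:ℝ)..1, (fderiv ℝ W (γ t) (δ t) * ‖deriv γ t‖^2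
        + W (γ t) * (2 * (inner ℝ (deriv γ t) (deriv δ t) : ℝ)))) (0:ℝ) := by
  have hγ' := contDiff_deriv γ hγ
  have hδ' := contDiff_deriv δ hδ
  have hsm : ContDiff ℝ (⊤ : ℕ∞) (fun p : ℝ × ℝ =>
      W (γ p.2 + p.1 • δ p.2) * ‖deriv γ p.2 + p.1 • deriv δ p.2‖^2) :=
    (hW.comp ((hγ.comp contDiff_snd).add (contDiff_fst.smul (hδ.comp contDiff_snd)))).mul
      (ContDiff.norm_sq (𝕜 := ℝ) ((hγ'.comp contDiff_snd).add (contDiff_fst.smul (hδ'.comp contDiff_snd))))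
  have h := DUI (fun s t => W (γ t + s • δ t) * ‖deriv γ t + s • deriv δ t‖^2) hsm 0
  have hc : (fun t : ℝ => deriv (fun s : ℝ => W (γ t + s • δ t) * ‖deriv γ t + s • deriv δ t‖^2) (0:ℝ))
      = fun t => (fderiv ℝ W (γ t) (δ t) * ‖deriv γ t‖^2
        + W (γ t) * (2 * (inner ℝ (deriv γ t) (deriv δ t) : ℝ))) := by
    funext t
    have hA : HasDerivAt (fun s : ℝ => γ t + s • δ t) (δ t) 0 := by
      simpa using ((hasDerivAt_id (0:ℝ)).smul_const (δ t)).const_add (γ t)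
    have hA' : HasDerivAt (fun s : ℝ => deriv γ t + s • deriv δ t) (deriv δ t) 0 := by
      simpa using ((hasDerivAt_id (0:ℝ)).smul_const (deriv δ t)).const_add (deriv γ t)
    have hB : HasDerivAt (fun s : ℝ => W (γ t + s • δ t)) (fderiv ℝ W (γ t) (δ t)) 0 := by
      have := (hW.differentiable (by simp) (γ t + (0:ℝ) • δ t)).hasFDerivAt.comp_hasDerivAt 0 hA
      rw [zero_smul, add_zero] at this
      exact this
    have hC : HasDerivAt (fun s : ℝ => ‖deriv γ t + s • deriv δ t‖^2)
        (2 * (inner ℝ (deriv γ t) (deriv δ t) : ℝ)) 0 := by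
      have := hA'.norm_sq
      simpa using this
    have h2 := (hB.mul hC).deriv
    simp at h2; exact h2
  rw [hc] at h
  exact h

lemma energy_family (V U : E2 → ℝ) (ε : ℝ) (γ δ : ℝ → E2)
    (hγ : ContDiff ℝ (⊤ : ℕ∞) γ) (hδ : ContDiff ℝ (⊤ : ℕ∞) δ) (s : ℝ) :
    energy V U ε (fun t => γ t + s • δ t)
      = ∫ t in (0:ℝ)..1, (V (γ t + s • δ t) + ε * U (γ t + s • δ t))
          * ‖deriv γ t + s • deriv δ t‖^2 := by
  unfold energy
  refine intervalIntegral.integral_congr fun t _ => ?_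
  have hd : deriv (fun u => γ u + s • δ u) t = deriv γ t + s • deriv δ t :=
    (((hγ.differentiable (by simp) t).hasDerivAt).add
      (((hδ.differentiable (by simp) t).hasDerivAt).const_smul s)).deriv
  rw [hd]

lemma crit_form (V U : E2 → ℝ) (hV : ContDiff ℝ (⊤ : ℕ∞) V) (hU : ContDiff ℝ (⊤ : ℕ∞) U) (ε : ℝ)
    (γ : ℝ → E2) (hγ : ContDiff ℝ (⊤ : ℕ∞) γ) (hcrit : IsCritical V U ε γ)
    (δ : ℝ → E2) (hδ : ContDiff ℝ (⊤ : ℕ∞) δ) (h0 : δ 0 = 0) (h1 : δ 1 = 0) :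
    ∫ t in (0:ℝ)..1, (fderiv ℝ (fun x => V x + ε * U x) (γ t) (δ t) * ‖deriv γ t‖^2
      + (V (γ t) + ε * U (γ t)) * (2 * (inner ℝ (deriv γ t) (deriv δ t) : ℝ))) = 0 := by
  have hW : ContDiff ℝ (⊤ : ℕ∞) (fun x => V x + ε * U x) := hV.add (contDiff_const.mul hU)
  have h := first_var _ hW γ δ hγ hδ
  have hc := hcrit δ hδ h0 h1
  have he : (fun s : ℝ => energy V U ε (fun t => γ t + s • δ t))
      = fun s => ∫ t in (0:ℝ)..1,
          (fun x => V x + ε * U x) (γ t + s • δ t) * ‖deriv γ t + s • deriv δ t‖^2 := by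
    funext s
    exact energy_family V U ε γ δ hγ hδ s
  rw [he] at hc
  have h3 : deriv (fun s : ℝ => ∫ t in (0:ℝ)..1,
      (fun x => V x + ε * U x) (γ t + s • δ t) * ‖deriv γ t + s • deriv δ t‖^2) (0:ℝ)
      = ∫ t in (0:ℝ)..1, (fderiv ℝ (fun x => V x + ε * U x) (γ t) (δ t) * ‖deriv γ t‖^2
      + (V (γ t) + ε * U (γ t)) * (2 * (inner ℝ (deriv γ t) (deriv δ t) : ℝ))) := h.deriv
  exact h3.symm.trans hc

lemma zero_of_nonneg (g : ℝ → ℝ) (hg : Continuous g) (hnn : ∀ t, 0 ≤ g t)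
    (hint : (∫ t in (0:ℝ)..1, g t) = 0) : ∀ t ∈ Icc (0:ℝ) 1, g t = 0 := by
  intro t ht
  by_contra hne
  have hpos : 0 < g t := lt_of_le_of_ne (hnn t) (Ne.symm hne)
  have hU : IsOpen {u : ℝ | 0 < g u} := isOpen_lt continuous_const hg
  obtain ⟨ε, hε, hball⟩ := Metric.isOpen_iff.1 hU t hpos
  set x := max (t - ε/2) 0 with hx
  set y := min (t + ε/2) 1 with hy
  obtain ⟨ht0, ht1⟩ := ht
  have hxy : x < y := by
    rw [hx, hy, max_lt_iff, lt_min_iff, lt_min_iff]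
    exact ⟨⟨by linarith, by linarith⟩, ⟨by linarith, by linarith⟩⟩
  have hsub : Ioo x y ⊆ {u : ℝ | 0 < g u} := by
    intro u hu
    apply hball
    rw [Metric.mem_ball, Real.dist_eq, abs_lt]
    have h1 : t - ε/2 ≤ x := le_max_left _ _
    have h2 : y ≤ t + ε/2 := min_le_left _ _
    exact ⟨by linarith [hu.1], by linarith [hu.2]⟩
  have hsub2 : Ioo x y ⊆ Ioc (0:ℝ) 1 := fun u hu =>
    ⟨lt_of_le_of_lt (le_max_right _ _) hu.1, le_trans (le_of_lt hu.2) (min_le_right _ _)⟩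
  rw [intervalIntegral.integral_of_le zero_le_one] at hint
  have hInt : MeasureTheory.IntegrableOn g (Ioc (0:ℝ) 1) := hg.integrableOn_Ioc
  have hae := (MeasureTheory.integral_eq_zero_iff_of_nonneg_ae
    (Filter.Eventually.of_forall (fun u => hnn u)) hInt).1 hint
  have hnull : volume.restrict (Ioc (0:ℝ) 1) {u : ℝ | 0 < g u} = 0 := by
    have h2 : {u : ℝ | 0 < g u} ⊆ {u : ℝ | ¬ g u = (0 : ℝ → ℝ) u} :=
      fun u hu hu' => (ne_of_gt hu) hu'
    exact measure_mono_null h2 (MeasureTheory.ae_iff.1 hae)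
  rw [MeasureTheory.Measure.restrict_apply' measurableSet_Ioc] at hnull
  have h0 : volume (Ioo x y) = 0 :=
    measure_mono_null (fun u hu => Set.mem_inter (hsub hu) (hsub2 hu)) hnull
  rw [Real.volume_Ioo] at h0
  rw [ENNReal.ofReal_eq_zero] at h0
  linarith

lemma weak_to_mono (W : E2 → ℝ) (hW : ContDiff ℝ (⊤ : ℕ∞) W) (γ : ℝ → E2) (hγ : ContDiff ℝ (⊤ : ℕ∞) γ)
    (hc : ∀ δ : ℝ → E2, ContDiff ℝ (⊤ : ℕ∞) δ → δ 0 = 0 → δ 1 = 0 →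
      ∫ t in (0:ℝ)..1, (fderiv ℝ W (γ t) (δ t) * ‖deriv γ t‖^2
        + W (γ t) * (2 * (inner ℝ (deriv γ t) (deriv δ t) : ℝ))) = 0)
    (φ : ℝ → ℝ) (hφ : ContDiff ℝ (⊤ : ℕ∞) φ) (h0 : φ 0 = 0) (h1 : φ 1 = 0) :
    ∫ t in (0:ℝ)..1, deriv φ t * (W (γ t) * ‖deriv γ t‖^2) = 0 := by
  have hγ' := contDiff_deriv γ hγ
  have hγ'' := contDiff_deriv _ hγ'
  have hφ' := contDiff_deriv φ hφ
  set h : ℝ → ℝ := fun t => W (γ t) * ‖deriv γ t‖^2 with hh_def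
  have hh : ContDiff ℝ (⊤ : ℕ∞) h := (hW.comp hγ).mul (ContDiff.norm_sq (𝕜 := ℝ) hγ')
  set Dh : ℝ → ℝ := fun t => fderiv ℝ W (γ t) (deriv γ t) * ‖deriv γ t‖^2
    + W (γ t) * (2 * (inner ℝ (deriv γ t) (deriv (deriv γ) t) : ℝ)) with hDh_def
  have hDh_cont : Continuous Dh := by
    apply Continuous.add
    · exact (((hW.fderiv_right (m := (⊤ : ℕ∞)) (by simp)).continuous.comp hγ.continuous).clm_apply
        hγ'.continuous).mul ((ContDiff.norm_sq (𝕜 := ℝ) hγ').continuous)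
    · exact ((hW.comp hγ).continuous).mul
        (continuous_const.mul (hγ'.continuous.inner hγ''.continuous))
  have hdh : ∀ t, HasDerivAt h (Dh t) t := by
    intro t
    exact ((hW.differentiable (by simp) _).hasFDerivAt.comp_hasDerivAt t
        (hγ.differentiable (by simp) t).hasDerivAt).mul
      ((hγ'.differentiable (by simp) t).hasDerivAt.norm_sq)
  set δ : ℝ → E2 := fun t => φ t • deriv γ t with hδ_def
  have hδ : ContDiff ℝ (⊤ : ℕ∞) δ := hφ.smul hγ'
  have key := hc δ hδ (by simp [hδ_def, h0]) (by simp [hδ_def, h1])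
  have hK : ∀ t, HasDerivAt (fun u => φ u * h u) (deriv φ t * h t + φ t * Dh t) t := by
    intro t
    exact (hφ.differentiable (by simp) t).hasDerivAt.mul (hdh t)
  have hpt : ∀ t : ℝ, fderiv ℝ W (γ t) (δ t) * ‖deriv γ t‖^2
      + W (γ t) * (2 * (inner ℝ (deriv γ t) (deriv δ t) : ℝ))
      = (deriv φ t * h t + φ t * Dh t) + deriv φ t * h t := by
    intro t
    have hdδ : deriv δ t = φ t • deriv (deriv γ) t + deriv φ t • deriv γ t :=
      ((hφ.differentiable (by simp) t).hasDerivAt.smul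
        (hγ'.differentiable (by simp) t).hasDerivAt).deriv
    rw [hdδ]
    simp only [hδ_def, hDh_def, hh_def, ContinuousLinearMap.map_smul, smul_eq_mul,
      inner_add_right, real_inner_smul_right, real_inner_self_eq_norm_sq]
    ring
  have hcont1 : Continuous (fun t => deriv φ t * h t + φ t * Dh t) :=
    (hφ'.continuous.mul hh.continuous).add (hφ.continuous.mul hDh_cont)
  have hcont2 : Continuous (fun t => deriv φ t * h t) := hφ'.continuous.mul hh.continuous
  have hsplit : ∫ t in (0:ℝ)..1, (fderiv ℝ W (γ t) (δ t) * ‖deriv γ t‖^2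
      + W (γ t) * (2 * (inner ℝ (deriv γ t) (deriv δ t) : ℝ)))
      = (∫ t in (0:ℝ)..1, (deriv φ t * h t + φ t * Dh t))
        + ∫ t in (0:ℝ)..1, deriv φ t * h t := by
    rw [← intervalIntegral.integral_add (hcont1.intervalIntegrable 0 1)
      (hcont2.intervalIntegrable 0 1)]
    exact intervalIntegral.integral_congr fun t _ => hpt t
  have hftc : (∫ t in (0:ℝ)..1, (deriv φ t * h t + φ t * Dh t))
      = φ 1 * h 1 - φ 0 * h 0 :=
    intervalIntegral.integral_eq_sub_of_hasDerivAt (fun t _ => hK t)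
      (hcont1.intervalIntegrable 0 1)
  rw [hsplit, hftc, h0, h1] at key
  simpa using key

lemma conserved (W : E2 → ℝ) (hW : ContDiff ℝ (⊤ : ℕ∞) W) (γ : ℝ → E2) (hγ : ContDiff ℝ (⊤ : ℕ∞) γ)
    (hc : ∀ δ : ℝ → E2, ContDiff ℝ (⊤ : ℕ∞) δ → δ 0 = 0 → δ 1 = 0 →
      ∫ t in (0:ℝ)..1, (fderiv ℝ W (γ t) (δ t) * ‖deriv γ t‖^2
        + W (γ t) * (2 * (inner ℝ (deriv γ t) (deriv δ t) : ℝ))) = 0) :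
    ∀ t ∈ Icc (0:ℝ) 1, W (γ t) * ‖deriv γ t‖^2
      = ∫ u in (0:ℝ)..1, W (γ u) * ‖deriv γ u‖^2 := by
  have hγ' := contDiff_deriv γ hγ
  set h : ℝ → ℝ := fun t => W (γ t) * ‖deriv γ t‖^2 with hh_def
  have hh : Continuous h :=
    ((hW.comp hγ).continuous).mul ((ContDiff.norm_sq (𝕜 := ℝ) hγ').continuous)
  have hmono := weak_to_mono W hW γ hγ hc
  set M : ℕ → ℝ := fun n => ∫ t in (0:ℝ)..1, t^n * h t with hM_def
  have hMrec : ∀ n : ℕ, ((n:ℝ)+1) * M n = ((n:ℝ)+2) * M (n+1) := by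
    intro n
    have hφ : ContDiff ℝ (⊤ : ℕ∞) (fun x : ℝ => x^(n+1) - x^(n+2)) :=
      (contDiff_id.pow _).sub (contDiff_id.pow _)
    have key := hmono _ hφ (by norm_num) (by norm_num)
    have hd : ∀ t : ℝ, deriv (fun x : ℝ => x^(n+1) - x^(n+2)) t
        = ((n:ℝ)+1) * t^n - ((n:ℝ)+2) * t^(n+1) := by
      intro t
      have := ((hasDerivAt_pow (n+1) t).sub (hasDerivAt_pow (n+2) t)).deriv
      simpa [Nat.add_sub_cancel] using this
    rw [show (∫ t in (0:ℝ)..1, deriv (fun x : ℝ => x^(n+1) - x^(n+2)) t * h t)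
        = ∫ t in (0:ℝ)..1, (((n:ℝ)+1) * (t^n * h t) - ((n:ℝ)+2) * (t^(n+1) * h t)) from
      intervalIntegral.integral_congr fun t _ => by rw [hd t]; ring] at key
    rw [intervalIntegral.integral_sub (f := fun t => ((n:ℝ)+1) * (t^n * h t))
        (g := fun t => ((n:ℝ)+2) * (t^(n+1) * h t))
        ((continuous_const.mul ((continuous_pow n).mul hh)).intervalIntegrable 0 1)
        ((continuous_const.mul ((continuous_pow (n+1)).mul hh)).intervalIntegrable 0 1),
      intervalIntegral.integral_const_mul, intervalIntegral.integral_const_mul] at key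
    push_cast at key ⊢
    linarith
  have hMc : ∀ n : ℕ, ((n:ℝ)+1) * M n = M 0 := by
    intro n
    induction n with
    | zero => norm_num
    | succ k ih =>
      have := hMrec k
      push_cast at this ⊢
      linarith
  set g : ℝ → ℝ := fun t => h t - M 0 with hg_def
  have hg : Continuous g := hh.sub continuous_const
  have hgmom : ∀ n : ℕ, ∫ t in (0:ℝ)..1, t^n * g t = 0 := by
    intro n
    have hsplit : ∫ t in (0:ℝ)..1, t^n * g t
        = (∫ t in (0:ℝ)..1, t^n * h t) - ∫ t in (0:ℝ)..1, t^n * M 0 := by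
      rw [← intervalIntegral.integral_sub (f := fun t => t^n * h t) (g := fun t => t^n * M 0)
        (((continuous_pow n).mul hh).intervalIntegrable 0 1)
        (((continuous_pow n).mul continuous_const).intervalIntegrable 0 1)]
      exact intervalIntegral.integral_congr fun t _ => by simp [hg_def]; ring
    have hpow : ∫ t in (0:ℝ)..1, t^n * M 0 = (1/((n:ℝ)+1)) * M 0 := by
      rw [intervalIntegral.integral_mul_const, integral_pow]
      norm_num
    have hn1 : ((n:ℝ)+1) ≠ 0 := by positivity
    have := hMc n
    rw [hsplit, hpow]
    field_simp
    linarith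
  have hpol : ∀ p : Polynomial ℝ, ∫ t in (0:ℝ)..1, Polynomial.eval t p * g t = 0 := by
    intro p
    induction p using Polynomial.induction_on' with
    | add p q hp hq =>
      have : ∀ t : ℝ, Polynomial.eval t (p + q) * g t
          = Polynomial.eval t p * g t + Polynomial.eval t q * g t := by
        intro t; rw [Polynomial.eval_add]; ring
      rw [intervalIntegral.integral_congr (fun t _ => this t),
        intervalIntegral.integral_add (f := fun t => Polynomial.eval t p * g t)
          (g := fun t => Polynomial.eval t q * g t) ((p.continuous.mul hg).intervalIntegrable 0 1)
          ((q.continuous.mul hg).intervalIntegrable 0 1), hp, hq]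
      norm_num
    | monomial n a =>
      have : ∀ t : ℝ, Polynomial.eval t (Polynomial.monomial n a) * g t
          = a * (t^n * g t) := by
        intro t; rw [Polynomial.eval_monomial]; ring
      rw [intervalIntegral.integral_congr (fun t _ => this t),
        intervalIntegral.integral_const_mul, hgmom n, mul_zero]
  obtain ⟨C, hC⟩ := (isCompact_Icc (a := (0:ℝ)) (b := 1)).exists_bound_of_continuousOn
    hg.continuousOn
  have hC0 : 0 ≤ C := le_trans (norm_nonneg (g 0)) (hC 0 ⟨le_refl 0, zero_le_one⟩)
  set I : ℝ := ∫ t in (0:ℝ)..1, (g t)^2 with hI_def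
  have hInn : 0 ≤ I :=
    intervalIntegral.integral_nonneg zero_le_one (fun t _ => sq_nonneg _)
  have key : ∀ ε : ℝ, 0 < ε → I ≤ C * ε := by
    intro ε hε
    obtain ⟨p, hp⟩ := exists_polynomial_near_of_continuousOn 0 1 g hg.continuousOn ε hε
    have hsplit : I = (∫ t in (0:ℝ)..1, g t * (g t - Polynomial.eval t p))
        + ∫ t in (0:ℝ)..1, Polynomial.eval t p * g t := by
      rw [← intervalIntegral.integral_add (f := fun t => g t * (g t - Polynomial.eval t p))
        (g := fun t => Polynomial.eval t p * g t)
        ((hg.mul (hg.sub p.continuous)).intervalIntegrable 0 1)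
        ((p.continuous.mul hg).intervalIntegrable 0 1)]
      exact intervalIntegral.integral_congr fun t _ => by ring
    rw [hsplit, hpol p, add_zero]
    have hb : ∀ t ∈ Set.uIoc (0:ℝ) 1, ‖g t * (g t - Polynomial.eval t p)‖ ≤ C * ε := by
      intro t ht
      have ht' : t ∈ Icc (0:ℝ) 1 := by
        have := uIoc_of_le (zero_le_one (α := ℝ)) ▸ ht
        exact ⟨le_of_lt this.1, this.2⟩
      rw [norm_mul]
      have h1 : ‖g t‖ ≤ C := hC t ht'
      have h2 : ‖g t - Polynomial.eval t p‖ ≤ ε := by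
        rw [Real.norm_eq_abs, abs_sub_comm]
        exact le_of_lt (hp t ht')
      exact mul_le_mul h1 h2 (norm_nonneg _) hC0
    calc (∫ t in (0:ℝ)..1, g t * (g t - Polynomial.eval t p))
        ≤ ‖∫ t in (0:ℝ)..1, g t * (g t - Polynomial.eval t p)‖ := le_abs_self _
      _ ≤ C * ε * |(1:ℝ) - 0| := intervalIntegral.norm_integral_le_of_norm_le_const hb
      _ = C * ε := by norm_num
  have hI0 : I = 0 := by
    by_contra hne
    have hpos : 0 < I := lt_of_le_of_ne hInn (Ne.symm hne)
    have h2 := key (I/(C+1)) (by positivity)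
    have h3 : C * (I/(C+1)) < (C+1) * (I / (C+1)) :=
      mul_lt_mul_of_pos_right (by linarith) (by positivity)
    have h4 : (C+1) * (I/(C+1)) = I := by
      field_simp
    exact absurd (h2.trans_lt (h3.trans_eq h4)) (lt_irrefl I)
  have hzero := zero_of_nonneg (fun t => (g t)^2) (hg.pow 2) (fun t => sq_nonneg _) hI0
  intro t ht
  have hgt : g t = 0 := sq_eq_zero_iff.1 (hzero t ht)
  have hM0 : M 0 = ∫ u in (0:ℝ)..1, h u :=
    intervalIntegral.integral_congr fun u _ => by norm_num
  have h3 : h t - M 0 = 0 := hgt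
  have hlast : h t = M 0 := by linarith
  rw [hM0] at hlast
  exact hlast

lemma ederiv (V U : E2 → ℝ) (hV : ContDiff ℝ (⊤ : ℕ∞) V) (hU : ContDiff ℝ (⊤ : ℕ∞) U)
    (Γ : ℝ → ℝ → E2) (hΓ : ContDiff ℝ (⊤ : ℕ∞) (fun p : ℝ × ℝ => Γ p.1 p.2)) (ε : ℝ)
    (hcrit : IsCritical V U ε (Γ ε))
    (h0 : (fun e => Γ e 0) =ᶠ[nhds ε] fun _ => Γ ε 0)
    (h1 : (fun e => Γ e 1) =ᶠ[nhds ε] fun _ => Γ ε 1) :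
    HasDerivAt (fun s => energy V U s (Γ s))
      (∫ t in (0:ℝ)..1, U (Γ ε t) * ‖deriv (Γ ε) t‖^2) ε := by
  set G : ℝ × ℝ → E2 := fun p => Γ p.1 p.2 with hG_def
  have hG : ContDiff ℝ (⊤ : ℕ∞) G := hΓ
  have hG' : ContDiff ℝ (⊤ : ℕ∞) (fderiv ℝ G) := hG.fderiv_right (m := (⊤ : ℕ∞)) (by simp)
  have hG'' : ContDiff ℝ (⊤ : ℕ∞) (fderiv ℝ (fderiv ℝ G)) := hG'.fderiv_right (m := (⊤ : ℕ∞)) (by simp)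
  have hslice : ∀ e : ℝ, ContDiff ℝ (⊤ : ℕ∞) (Γ e) := fun e =>
    hG.comp (contDiff_const.prodMk contDiff_id)
  -- derivative in t of a slice
  have hds : ∀ e t : ℝ, HasDerivAt (Γ e) (fderiv ℝ G (e, t) (0, 1)) t := by
    intro e t
    exact (hG.differentiable (by simp) _).hasFDerivAt.comp_hasDerivAt t
      ((hasDerivAt_const t e).prodMk (hasDerivAt_id t))
  have hds' : ∀ e t : ℝ, deriv (Γ e) t = fderiv ℝ G (e, t) (0, 1) := fun e t => (hds e t).deriv
  -- derivative in ε direction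
  set δε : ℝ → E2 := fun t => fderiv ℝ G (ε, t) (1, 0) with hδε_def
  have hδε_sm : ContDiff ℝ (⊤ : ℕ∞) δε :=
    (hG'.comp (contDiff_const.prodMk contDiff_id)).clm_apply contDiff_const
  have hGe : ∀ t s : ℝ, HasDerivAt (fun e => G (e, t)) (fderiv ℝ G (s, t) (1, 0)) s := by
    intro t s
    exact (hG.differentiable (by simp) _).hasFDerivAt.comp_hasDerivAt s
      ((hasDerivAt_id s).prodMk (hasDerivAt_const s t))
  -- symmetry of second derivatives
  have hsymm : ∀ p : ℝ × ℝ, fderiv ℝ (fderiv ℝ G) p (0, 1) (1, 0)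
      = fderiv ℝ (fderiv ℝ G) p (1, 0) (0, 1) := by
    intro p
    exact second_derivative_symmetric (fun y => (hG.differentiable (by simp) y).hasFDerivAt)
      ((hG'.differentiable (by simp) p).hasFDerivAt) _ _
  -- derivative of δε in t
  have hδd : ∀ t : ℝ, HasDerivAt δε (fderiv ℝ (fderiv ℝ G) (ε, t) (0, 1) (1, 0)) t := by
    intro t
    have hline : HasDerivAt (fun u : ℝ => ((ε : ℝ), u)) (((0:ℝ), (1:ℝ))) t :=
      (hasDerivAt_const t ε).prodMk (hasDerivAt_id t)
    have hc : HasDerivAt (fun u : ℝ => fderiv ℝ G (ε, u))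
        (fderiv ℝ (fderiv ℝ G) (ε, t) (0, 1)) t :=
      (hG'.differentiable (by simp) _).hasFDerivAt.comp_hasDerivAt t hline
    have := hc.clm_apply (hasDerivAt_const t (((1:ℝ), (0:ℝ)) : ℝ × ℝ))
    simpa using this
  have hdδ : ∀ t : ℝ, deriv δε t = fderiv ℝ (fderiv ℝ G) (ε, t) (1, 0) (0, 1) := by
    intro t
    rw [(hδd t).deriv]
    exact hsymm (ε, t)
  -- endpoints of δε vanish
  have hδε0 : δε 0 = 0 := by
    have hd : HasDerivAt (fun e => G (e, 0)) (δε 0) ε := hGe 0 ε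
    have := hd.deriv
    rw [Filter.EventuallyEq.deriv_eq h0, deriv_const] at this
    exact this.symm
  have hδε1 : δε 1 = 0 := by
    have hd : HasDerivAt (fun e => G (e, 1)) (δε 1) ε := hGe 1 ε
    have := hd.deriv
    rw [Filter.EventuallyEq.deriv_eq h1, deriv_const] at this
    exact this.symm
  -- the parametric integrand
  set F : ℝ → ℝ → ℝ := fun s t => (V (G (s, t)) + s * U (G (s, t)))
    * ‖fderiv ℝ G (s, t) (0, 1)‖^2 with hF_def
  have hFsm : ContDiff ℝ (⊤ : ℕ∞) (fun p : ℝ × ℝ => F p.1 p.2) :=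
    ((hV.comp hG).add (contDiff_fst.mul (hU.comp hG))).mul
      (ContDiff.norm_sq (𝕜 := ℝ) ((hG'.clm_apply contDiff_const)))
  have hE : (fun s => energy V U s (Γ s)) = fun s => ∫ t in (0:ℝ)..1, F s t := by
    funext s
    exact intervalIntegral.integral_congr fun t _ => by rw [hds' s t]
  have hDUI := DUI F hFsm ε
  -- pointwise derivative in s
  set Dt : ℝ → E2 := fun t => fderiv ℝ (fderiv ℝ G) (ε, t) (1, 0) (0, 1) with hDt_def
  have htot : ∀ t : ℝ, HasDerivAt (fun s => F s t)
      ((fderiv ℝ V (G (ε, t)) (δε t) + (1 * U (G (ε, t))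
          + ε * fderiv ℝ U (G (ε, t)) (δε t))) * ‖fderiv ℝ G (ε, t) (0, 1)‖^2
        + (V (G (ε, t)) + ε * U (G (ε, t)))
          * (2 * (inner ℝ (fderiv ℝ G (ε, t) (0, 1)) (Dt t) : ℝ))) ε := by
    intro t
    have hGe' := hGe t ε
    have hV' : HasDerivAt (fun s => V (G (s, t))) (fderiv ℝ V (G (ε, t)) (δε t)) ε :=
      (hV.differentiable (by simp) _).hasFDerivAt.comp_hasDerivAt ε hGe'
    have hU' : HasDerivAt (fun s => U (G (s, t))) (fderiv ℝ U (G (ε, t)) (δε t)) ε :=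
      (hU.differentiable (by simp) _).hasFDerivAt.comp_hasDerivAt ε hGe'
    have hsU : HasDerivAt (fun s => s * U (G (s, t)))
        (1 * U (G (ε, t)) + ε * fderiv ℝ U (G (ε, t)) (δε t)) ε :=
      (hasDerivAt_id ε).mul hU'
    have hGt : HasDerivAt (fun s => fderiv ℝ G (s, t) (0, 1)) (Dt t) ε := by
      have hline : HasDerivAt (fun u : ℝ => (u, t)) (((1:ℝ), (0:ℝ))) ε :=
        (hasDerivAt_id ε).prodMk (hasDerivAt_const ε t)
      have hc : HasDerivAt (fun u : ℝ => fderiv ℝ G (u, t))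
          (fderiv ℝ (fderiv ℝ G) (ε, t) (1, 0)) ε :=
        (hG'.differentiable (by simp) _).hasFDerivAt.comp_hasDerivAt ε hline
      have := hc.clm_apply (hasDerivAt_const ε (((0:ℝ), (1:ℝ)) : ℝ × ℝ))
      simpa using this
    exact (hV'.add hsU).mul hGt.norm_sq
  -- split the integral
  set critexp : ℝ → ℝ := fun t => (fderiv ℝ V (Γ ε t) (δε t)
      + ε * fderiv ℝ U (Γ ε t) (δε t)) * ‖fderiv ℝ G (ε, t) (0, 1)‖^2
    + (V (Γ ε t) + ε * U (Γ ε t))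
      * (2 * (inner ℝ (fderiv ℝ G (ε, t) (0, 1)) (Dt t) : ℝ)) with hcritexp_def
  set Uterm : ℝ → ℝ := fun t => U (Γ ε t) * ‖fderiv ℝ G (ε, t) (0, 1)‖^2 with hUterm_def
  have hptd : ∀ t : ℝ, deriv (fun s => F s t) ε = critexp t + Uterm t := by
    intro t
    rw [(htot t).deriv, hcritexp_def, hUterm_def]
    show _ = _
    ring
  -- continuity facts
  have hslice_cont : Continuous (Γ ε) := (hslice ε).continuous
  have hGt_cont : Continuous (fun t : ℝ => fderiv ℝ G (ε, t) (0, 1)) :=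
    ((hG'.continuous.comp (continuous_const.prodMk continuous_id)).clm_apply continuous_const)
  have hδε_cont : Continuous δε := hδε_sm.continuous
  have hDt_cont : Continuous Dt :=
    (((hG''.continuous.comp (continuous_const.prodMk continuous_id)).clm_apply
      continuous_const).clm_apply continuous_const)
  have hcritexp_cont : Continuous critexp := by
    apply Continuous.add
    · exact ((((hV.fderiv_right (m := (⊤ : ℕ∞)) (by simp)).continuous.comp hslice_cont).clm_apply
        hδε_cont).add (continuous_const.mul
          (((hU.fderiv_right (m := (⊤ : ℕ∞)) (by simp)).continuous.comp hslice_cont).clm_apply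
            hδε_cont))).mul ((ContDiff.norm_sq (𝕜 := ℝ)
              ((hG'.comp (contDiff_const.prodMk contDiff_id)).clm_apply contDiff_const)).continuous)
    · exact (((hV.continuous.comp hslice_cont).add
        (continuous_const.mul (hU.continuous.comp hslice_cont)))).mul
        (continuous_const.mul (hGt_cont.inner hDt_cont))
  have hUterm_cont : Continuous Uterm :=
    (hU.continuous.comp hslice_cont).mul
      ((ContDiff.norm_sq (𝕜 := ℝ)
        ((hG'.comp (contDiff_const.prodMk contDiff_id)).clm_apply contDiff_const)).continuous)
  -- criticality kills critexp
  have hfd_sum : ∀ t : ℝ, fderiv ℝ (fun x => V x + ε * U x) (Γ ε t) (δε t)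
      = fderiv ℝ V (Γ ε t) (δε t) + ε * fderiv ℝ U (Γ ε t) (δε t) := by
    intro t
    have hfd : HasFDerivAt (fun x => V x + ε * U x)
        (fderiv ℝ V (Γ ε t) + ε • fderiv ℝ U (Γ ε t)) (Γ ε t) :=
      (hV.differentiable (by simp) _).hasFDerivAt.add
        (((hU.differentiable (by simp) _).hasFDerivAt).const_mul ε)
    rw [hfd.fderiv]
    simp
  have hcrit0 := crit_form V U hV hU ε (Γ ε) (hslice ε) hcrit δε hδε_sm hδε0 hδε1
  have hcrit0' : ∫ t in (0:ℝ)..1, critexp t = 0 := by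
    refine Eq.trans ?_ hcrit0
    apply intervalIntegral.integral_congr
    intro t ht
    simp only [hcritexp_def]
    rw [hfd_sum t, hds' ε t, hdδ t]
  -- assemble
  have hval : (∫ t in (0:ℝ)..1, deriv (fun s => F s t) ε)
      = ∫ t in (0:ℝ)..1, U (Γ ε t) * ‖deriv (Γ ε) t‖^2 := by
    rw [intervalIntegral.integral_congr (fun t _ => hptd t),
      intervalIntegral.integral_add (hcritexp_cont.intervalIntegrable 0 1)
        (hUterm_cont.intervalIntegrable 0 1), hcrit0', zero_add]
    exact intervalIntegral.integral_congr fun t _ => by rw [hUterm_def]; show _ = _; rw [hds' ε t]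
  rw [hE]
  rw [hval] at hDUI
  exact hDUI

end helpers

/-- **Analytic core of Theorem 1.3** (second variation argument): a family of critical curves
with fixed endpoints along a linear deformation, with constant energy and a minimizing
unperturbed curve, forces the perturbation `U` to vanish along the unperturbed curve. -/
theorem second_variation_core
    (V U : E2 → ℝ) (hV : ContDiff ℝ (⊤ : ℕ∞) V) (hU : ContDiff ℝ (⊤ : ℕ∞) U)
    (hVpos : ∀ x, 0 < V x)
    (a b : E2) (hab : a ≠ b) (ε₀ : ℝ) (hε₀ : 0 < ε₀)
    (Γ : ℝ → ℝ → E2) (hΓ : ContDiff ℝ (⊤ : ℕ∞) (fun p : ℝ × ℝ => Γ p.1 p.2))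
    (hΓa : ∀ ε ∈ Set.Ioo (-ε₀) ε₀, Γ ε 0 = a)
    (hΓb : ∀ ε ∈ Set.Ioo (-ε₀) ε₀, Γ ε 1 = b)
    (hcrit : ∀ ε ∈ Set.Ioo (-ε₀) ε₀, IsCritical V U ε (Γ ε))
    (hmin : ∀ ω : ℝ → E2, ContDiff ℝ (⊤ : ℕ∞) ω → ω 0 = a → ω 1 = b →
      energy V U 0 (Γ 0) ≤ energy V U 0 ω)
    (hconst : ∀ ε ∈ Set.Ioo (-ε₀) ε₀, ∀ ε' ∈ Set.Ioo (-ε₀) ε₀,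
      energy V U ε (Γ ε) = energy V U ε' (Γ ε')) :
    ∀ t ∈ Set.Icc (0:ℝ) 1, U (Γ 0 t) = 0 := by
  have h0S : (0:ℝ) ∈ Set.Ioo (-ε₀) ε₀ := ⟨by linarith, hε₀⟩
  have hslice : ∀ e : ℝ, ContDiff ℝ (⊤ : ℕ∞) (Γ e) := fun e =>
    hΓ.comp (contDiff_const.prodMk contDiff_id)
  have hW0 : ContDiff ℝ (⊤ : ℕ∞) (fun x => V x + (0:ℝ) * U x) := hV.add (contDiff_const.mul hU)
  -- the first-order term vanishes for every ε
  have hIzero : ∀ ε ∈ Set.Ioo (-ε₀) ε₀,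
      (∫ t in (0:ℝ)..1, U (Γ ε t) * ‖deriv (Γ ε) t‖^2) = 0 := by
    intro ε hε
    have hmem : Set.Ioo (-ε₀) ε₀ ∈ nhds ε := isOpen_Ioo.mem_nhds hε
    have h0 : (fun e => Γ e 0) =ᶠ[nhds ε] fun _ => Γ ε 0 :=
      Filter.eventually_of_mem hmem (fun x hx => by show Γ x 0 = Γ ε 0; rw [hΓa x hx, hΓa ε hε])
    have h1 : (fun e => Γ e 1) =ᶠ[nhds ε] fun _ => Γ ε 1 :=
      Filter.eventually_of_mem hmem (fun x hx => by show Γ x 1 = Γ ε 1; rw [hΓb x hx, hΓb ε hε])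
    have hd := ederiv V U hV hU Γ hΓ ε (hcrit ε hε) h0 h1
    have hconst' : (fun s => energy V U s (Γ s)) =ᶠ[nhds ε] fun _ => energy V U ε (Γ ε) :=
      Filter.eventually_of_mem hmem (fun x hx => hconst x hx ε hε)
    have hz := hd.deriv
    rw [Filter.EventuallyEq.deriv_eq hconst', deriv_const] at hz
    exact hz.symm
  -- energy splits as zeroth order plus ε times first order
  have hsplitE : ∀ ε : ℝ, energy V U ε (Γ ε)
      = energy V U 0 (Γ ε) + ε * ∫ t in (0:ℝ)..1, U (Γ ε t) * ‖deriv (Γ ε) t‖^2 := by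
    intro ε
    have hcont1 : Continuous (fun t => (V (Γ ε t) + 0 * U (Γ ε t)) * ‖deriv (Γ ε) t‖^2) :=
      ((hV.continuous.comp (hslice ε).continuous).add
        (continuous_const.mul (hU.continuous.comp (hslice ε).continuous))).mul
        (ContDiff.norm_sq (𝕜 := ℝ) (contDiff_deriv _ (hslice ε))).continuous
    have hcont2 : Continuous (fun t => ε * (U (Γ ε t) * ‖deriv (Γ ε) t‖^2)) :=
      continuous_const.mul ((hU.continuous.comp (hslice ε).continuous).mul
        (ContDiff.norm_sq (𝕜 := ℝ) (contDiff_deriv _ (hslice ε))).continuous)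
    unfold energy
    rw [← intervalIntegral.integral_const_mul, ← intervalIntegral.integral_add
      (hcont1.intervalIntegrable 0 1) (hcont2.intervalIntegrable 0 1)]
    exact intervalIntegral.integral_congr fun t _ => by ring
  have hE00 : ∀ ε ∈ Set.Ioo (-ε₀) ε₀, energy V U 0 (Γ ε) = energy V U 0 (Γ 0) := by
    intro ε hε
    have h1 := hsplitE ε
    rw [hIzero ε hε, mul_zero, add_zero] at h1
    rw [← h1, hconst ε hε 0 h0S, hsplitE 0, hIzero 0 h0S, mul_zero, add_zero]
  -- each γ_ε is a critical point of the unperturbed energy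
  have hcritE0 : ∀ ε ∈ Set.Ioo (-ε₀) ε₀, IsCritical V U 0 (Γ ε) := by
    intro ε hε δ hδ hδ0 hδ1
    have hmin' : ∀ s : ℝ, energy V U 0 (fun t => Γ ε t + (0:ℝ) • δ t)
        ≤ energy V U 0 (fun t => Γ ε t + s • δ t) := by
      intro s
      have hcurve : ContDiff ℝ (⊤ : ℕ∞) (fun t => Γ ε t + s • δ t) :=
        (hslice ε).add (hδ.const_smul s)
      have ha' : Γ ε 0 + s • δ 0 = a := by rw [hδ0, smul_zero, add_zero, hΓa ε hε]
      have hb' : Γ ε 1 + s • δ 1 = b := by rw [hδ1, smul_zero, add_zero, hΓb ε hε]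
      have hA := hmin _ hcurve ha' hb'
      have hB : energy V U 0 (fun t => Γ ε t + (0:ℝ) • δ t) = energy V U 0 (Γ 0) := by
        have hfun : (fun t => Γ ε t + (0:ℝ) • δ t) = Γ ε := by
          funext u; rw [zero_smul, add_zero]
        rw [hfun]
        exact hE00 ε hε
      rw [hB]; exact hA
    have hloc : IsLocalMin (fun s : ℝ => energy V U 0 (fun t => Γ ε t + s • δ t)) 0 :=
      Filter.Eventually.of_forall hmin'
    exact hloc.deriv_eq_zero
  -- conserved quantities along each γ_ε
  have hconsEps : ∀ ε ∈ Set.Ioo (-ε₀) ε₀, ∀ t ∈ Set.Icc (0:ℝ) 1,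
      (V (Γ ε t) + ε * U (Γ ε t)) * ‖deriv (Γ ε) t‖^2 = energy V U ε (Γ ε) := by
    intro ε hε t ht
    have hWε : ContDiff ℝ (⊤ : ℕ∞) (fun x => V x + ε * U x) := hV.add (contDiff_const.mul hU)
    have hgoal := conserved (fun x => V x + ε * U x) hWε (Γ ε) (hslice ε)
      (fun δ hδ h₀ h₁ => crit_form V U hV hU ε (Γ ε) (hslice ε) (hcrit ε hε) δ hδ h₀ h₁) t ht
    unfold energy
    exact hgoal
  have hconsZero : ∀ ε ∈ Set.Ioo (-ε₀) ε₀, ∀ t ∈ Set.Icc (0:ℝ) 1,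
      V (Γ ε t) * ‖deriv (Γ ε) t‖^2 = energy V U 0 (Γ ε) := by
    intro ε hε t ht
    have hgoal := conserved (fun x => V x + (0:ℝ) * U x) hW0 (Γ ε) (hslice ε)
      (fun δ hδ h₀ h₁ => crit_form V U hV hU 0 (Γ ε) (hslice ε) (hcritE0 ε hε) δ hδ h₀ h₁) t ht
    have hg2 : (V (Γ ε t) + 0 * U (Γ ε t)) * ‖deriv (Γ ε) t‖^2
        = ∫ u in (0:ℝ)..1, (V (Γ ε u) + 0 * U (Γ ε u)) * ‖deriv (Γ ε) u‖^2 := hgoal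
    rw [zero_mul, add_zero] at hg2
    rw [hg2]
    unfold energy
    rfl
  -- the base energy is positive
  have he0pos : 0 < energy V U 0 (Γ 0) := by
    by_contra hle
    push_neg at hle
    have hzero : ∀ t ∈ Set.Icc (0:ℝ) 1, deriv (Γ 0) t = 0 := by
      intro t ht
      have h1 := hconsZero 0 h0S t ht
      have hVp := hVpos (Γ 0 t)
      have hn2 : ‖deriv (Γ 0) t‖^2 ≤ 0 := by nlinarith [sq_nonneg ‖deriv (Γ 0) t‖]
      have hn2' : ‖deriv (Γ 0) t‖^2 = 0 := le_antisymm hn2 (sq_nonneg _)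
      exact norm_eq_zero.mp ((pow_eq_zero_iff two_ne_zero).mp hn2')
    have hftc : ∫ t in (0:ℝ)..1, deriv (Γ 0) t = Γ 0 1 - Γ 0 0 :=
      intervalIntegral.integral_deriv_eq_sub
        (fun t _ => ((hslice 0).differentiable (by simp) t))
        ((contDiff_deriv _ (hslice 0)).continuous.intervalIntegrable 0 1)
    have hzero' : ∫ t in (0:ℝ)..1, deriv (Γ 0) t = 0 := by
      rw [intervalIntegral.integral_congr (g := fun _ => (0:E2))
        (fun t ht => hzero t (by rwa [Set.uIcc_of_le zero_le_one] at ht))]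
      simp
    rw [hzero', hΓa 0 h0S, hΓb 0 h0S] at hftc
    exact hab (sub_eq_zero.mp hftc.symm).symm
  -- U vanishes along γ_ε for ε ≠ 0
  have hUzero : ∀ ε ∈ Set.Ioo (-ε₀) ε₀, ε ≠ 0 → ∀ t ∈ Set.Icc (0:ℝ) 1, U (Γ ε t) = 0 := by
    intro ε hε hne t ht
    have h1 := hconsEps ε hε t ht
    have h2 := hconsZero ε hε t ht
    have h3 : energy V U ε (Γ ε) = energy V U 0 (Γ ε) := by
      rw [hsplitE ε, hIzero ε hε, mul_zero, add_zero]
    have hsub : (V (Γ ε t) + ε * U (Γ ε t)) * ‖deriv (Γ ε) t‖^2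
        - V (Γ ε t) * ‖deriv (Γ ε) t‖^2 = ε * (U (Γ ε t) * ‖deriv (Γ ε) t‖^2) := by ring
    rw [h1, h2, h3, sub_self] at hsub
    have h5 : U (Γ ε t) * ‖deriv (Γ ε) t‖^2 = 0 := by
      rcases mul_eq_zero.mp hsub.symm with h | h
      · exact absurd h hne
      · exact h
    have hVn : V (Γ ε t) * ‖deriv (Γ ε) t‖^2 = energy V U 0 (Γ 0) := by
      rw [h2, hE00 ε hε]
    have hnpos : ‖deriv (Γ ε) t‖^2 ≠ 0 := by
      intro hz
      rw [hz, mul_zero] at hVn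
      exact absurd hVn.symm (ne_of_gt he0pos)
    rcases mul_eq_zero.mp h5 with h | h
    · exact h
    · exact absurd h hnpos
  -- pass to the limit ε → 0
  intro t ht
  have hfc : Continuous (fun e : ℝ => U (Γ e t)) :=
    hU.continuous.comp (hΓ.continuous.comp (continuous_id.prodMk continuous_const))
  have hT1 : Filter.Tendsto (fun e : ℝ => U (Γ e t)) (nhdsWithin 0 {(0:ℝ)}ᶜ)
      (nhds (U (Γ 0 t))) :=
    hfc.continuousAt.tendsto.mono_left nhdsWithin_le_nhds
  have hev : (fun e : ℝ => U (Γ e t)) =ᶠ[nhdsWithin 0 {(0:ℝ)}ᶜ] fun _ => 0 := by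
    have hS : Set.Ioo (-ε₀) ε₀ ∈ nhdsWithin (0:ℝ) {(0:ℝ)}ᶜ :=
      nhdsWithin_le_nhds (isOpen_Ioo.mem_nhds h0S)
    have hC : {(0:ℝ)}ᶜ ∈ nhdsWithin (0:ℝ) {(0:ℝ)}ᶜ := self_mem_nhdsWithin
    filter_upwards [hS, hC] with e heS heC
    exact hUzero e heS heC t ht
  have hT2 : Filter.Tendsto (fun e : ℝ => U (Γ e t)) (nhdsWithin 0 {(0:ℝ)}ᶜ) (nhds 0) :=
    Filter.Tendsto.congr' hev.symm tendsto_const_nhds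
  exact tendsto_nhds_unique hT1 hT2

end
end

section
/- Second-order expansion of the energy along a family of critical curves (equation (eq:E reduced)): Let V, U : ℝ² → ℝ be smooth, a, b ∈ ℝ², ε₀ > 0, and let Γ : (−ε₀,ε₀) × [0,1] → ℝ² be smooth with Γ(ε,0) = a and Γ(ε,1) = b for all ε. Assume each γ_ε := Γ(ε,·) is a critical point of E_ε with fixed endpoints. Set F(ε) := E_ε(γ_ε) and γ¹(t) := ∂_εΓ(0,t). Then F is twice differentiable at 0 with F'(0) = E¹(γ₀) and F''(0) = −(d²/ds²)|_{s=0} E⁰(γ₀ + sγ¹). -/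
noncomputable section

open Set

open Topology

section Helpers

variable {F : Type*} [NormedAddCommGroup F] [NormedSpace ℝ F]
variable {X : Type*} [NormedAddCommGroup X] [NormedSpace ℝ X]

private lemma chainD {Φ : X → F} (hΦ : Differentiable ℝ Φ) {c : ℝ → X} {v : X} {x : ℝ}
    (hc : HasDerivAt c v x) :
    HasDerivAt (fun s => Φ (c s)) (fderiv ℝ Φ (c x) v) x :=
  (hΦ (c x)).hasFDerivAt.comp_hasDerivAt x hc

private lemma hasDerivAt_p1 (g : ℝ × ℝ → F) (hg : Differentiable ℝ g) (x t : ℝ) :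
    HasDerivAt (fun y => g (y, t)) (fderiv ℝ g (x, t) (1, 0)) x :=
  chainD hg ((hasDerivAt_id x).prodMk (hasDerivAt_const x t))

private lemma hasDerivAt_p2 (g : ℝ × ℝ → F) (hg : Differentiable ℝ g) (x t : ℝ) :
    HasDerivAt (fun y => g (x, y)) (fderiv ℝ g (x, t) (0, 1)) t :=
  chainD hg ((hasDerivAt_const t x).prodMk (hasDerivAt_id t))

private lemma contDiff_pd (g : ℝ × ℝ → F) (hg : ContDiff ℝ (⊤ : ℕ∞) g) (v : ℝ × ℝ) :
    ContDiff ℝ (⊤ : ℕ∞) (fun p : ℝ × ℝ => fderiv ℝ g p v) :=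
  (ContinuousLinearMap.apply ℝ F v).contDiff.comp (hg.fderiv_right (by simp))

private lemma clairaut (g : ℝ × ℝ → F) (hg : ContDiff ℝ (⊤ : ℕ∞) g) (p : ℝ × ℝ) :
    fderiv ℝ (fun q => fderiv ℝ g q (0, 1)) p (1, 0)
      = fderiv ℝ (fun q => fderiv ℝ g q (1, 0)) p (0, 1) := by
  have hdg : Differentiable ℝ (fderiv ℝ g) := (hg.fderiv_right (m := (⊤ : ℕ∞)) (by simp)).differentiable (by simp)
  have hx : HasFDerivAt (fderiv ℝ g) (fderiv ℝ (fderiv ℝ g) p) p := (hdg p).hasFDerivAt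
  have key : ∀ v : ℝ × ℝ, HasFDerivAt (fun q => fderiv ℝ g q v)
      ((ContinuousLinearMap.apply ℝ F v).comp (fderiv ℝ (fderiv ℝ g) p)) p :=
    fun v => ((ContinuousLinearMap.apply ℝ F v).hasFDerivAt).comp p hx
  rw [(key (0,1)).fderiv, (key (1,0)).fderiv]
  simp only [ContinuousLinearMap.coe_comp', Function.comp_apply,
    ContinuousLinearMap.apply_apply]
  exact second_derivative_symmetric (fun y => (hg.differentiable (by simp) y).hasFDerivAt) hx _ _

private lemma hasDerivAt_intParam (h : ℝ × ℝ → ℝ) (hh : ContDiff ℝ (⊤ : ℕ∞) h) (x₀ : ℝ) :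
    HasDerivAt (fun x => ∫ t in (0:ℝ)..1, h (x, t))
      (∫ t in (0:ℝ)..1, fderiv ℝ h (x₀, t) (1, 0)) x₀ := by
  have hc : Continuous h := hh.continuous
  have hd : Differentiable ℝ h := hh.differentiable (by simp)
  have hc' : Continuous fun p : ℝ × ℝ => fderiv ℝ h p (1, 0) := (contDiff_pd h hh _).continuous
  obtain ⟨C, hC⟩ := (isCompact_Icc.prod (isCompact_Icc : IsCompact (Icc (0:ℝ) 1))
    |>.exists_bound_of_continuousOn
      (hc'.continuousOn : ContinuousOn _ (Icc (x₀-1) (x₀+1) ×ˢ Icc (0:ℝ) 1)))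
  have key := intervalIntegral.hasDerivAt_integral_of_dominated_loc_of_deriv_le
    (F := fun x t => h (x, t)) (F' := fun x t => fderiv ℝ h (x, t) (1, 0))
    (bound := fun _ => C) (μ := MeasureTheory.volume) (a := 0) (b := 1) (x₀ := x₀)
    (s := Metric.ball x₀ 1) (Metric.ball_mem_nhds x₀ one_pos)
    (Filter.Eventually.of_forall fun x =>
      (hc.comp (Continuous.prodMk_right x)).aestronglyMeasurable)
    ((hc.comp (Continuous.prodMk_right x₀)).intervalIntegrable 0 1)
    ((hc'.comp (Continuous.prodMk_right x₀)).aestronglyMeasurable)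
    (Filter.Eventually.of_forall fun t ht x hx => by
      apply hC (x, t)
      constructor
      · have : |x - x₀| < 1 := by simpa [Real.dist_eq] using hx
        have h1 := abs_lt.1 this
        exact ⟨by linarith [h1.1], by linarith [h1.2]⟩
      · have : t ∈ Ioc (0:ℝ) 1 := by
          simpa [uIoc_of_le (by norm_num : (0:ℝ) ≤ 1)] using ht
        exact ⟨this.1.le, this.2⟩)
    intervalIntegrable_const
    (Filter.Eventually.of_forall fun t ht x hx => hasDerivAt_p1 h hd x t)
  exact key.2


private def EGm (Γ : ℝ → ℝ → E2) : ℝ × ℝ → E2 := fun p => Γ p.1 p.2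
private def EdG (Γ : ℝ → ℝ → E2) : ℝ × ℝ → E2 := fun p => fderiv ℝ (EGm Γ) p (0, 1)
private def EDG (Γ : ℝ → ℝ → E2) : ℝ × ℝ → E2 := fun p => fderiv ℝ (EGm Γ) p (1, 0)
private def EddG (Γ : ℝ → ℝ → E2) : ℝ × ℝ → E2 := fun p => fderiv ℝ (EDG Γ) p (0, 1)
private def EPsi (V U : E2 → ℝ) : ℝ × (E2 × E2) → ℝ :=
  fun z => (V z.2.1 + z.1 * U z.2.1) * ‖z.2.2‖ ^ 2
private def EXi (U : E2 → ℝ) : E2 × E2 → ℝ := fun q => U q.1 * ‖q.2‖ ^ 2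

end Helpers

section Geom
variable {V U : E2 → ℝ} {Γ : ℝ → ℝ → E2}

private lemma contDiff_EPsi (hV : ContDiff ℝ (⊤ : ℕ∞) V) (hU : ContDiff ℝ (⊤ : ℕ∞) U) :
    ContDiff ℝ (⊤ : ℕ∞) (EPsi V U) := by
  unfold EPsi
  exact ((hV.comp (contDiff_snd.fst)).add
    (contDiff_fst.mul (hU.comp (contDiff_snd.fst)))).mul (contDiff_snd.snd.norm_sq ℝ)

private lemma contDiff_EXi (hU : ContDiff ℝ (⊤ : ℕ∞) U) : ContDiff ℝ (⊤ : ℕ∞) (EXi U) := by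
  unfold EXi
  exact (hU.comp contDiff_fst).mul (contDiff_snd.norm_sq ℝ)

end Geom

section Geom2
variable {V U : E2 → ℝ} {Γ : ℝ → ℝ → E2}

private lemma hda_Gt (hG : ContDiff ℝ (⊤ : ℕ∞) (EGm Γ)) (ε t : ℝ) :
    HasDerivAt (Γ ε) (EdG Γ (ε, t)) t :=
  hasDerivAt_p2 (EGm Γ) (hG.differentiable (by simp)) ε t

private lemma hda_Ge (hG : ContDiff ℝ (⊤ : ℕ∞) (EGm Γ)) (ε t : ℝ) :
    HasDerivAt (fun e => Γ e t) (EDG Γ (ε, t)) ε :=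
  hasDerivAt_p1 (EGm Γ) (hG.differentiable (by simp)) ε t

private lemma contDiff_EdG (hG : ContDiff ℝ (⊤ : ℕ∞) (EGm Γ)) : ContDiff ℝ (⊤ : ℕ∞) (EdG Γ) :=
  contDiff_pd (EGm Γ) hG _

private lemma contDiff_EDG (hG : ContDiff ℝ (⊤ : ℕ∞) (EGm Γ)) : ContDiff ℝ (⊤ : ℕ∞) (EDG Γ) :=
  contDiff_pd (EGm Γ) hG _

private lemma contDiff_EddG (hG : ContDiff ℝ (⊤ : ℕ∞) (EGm Γ)) : ContDiff ℝ (⊤ : ℕ∞) (EddG Γ) :=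
  contDiff_pd (EDG Γ) (contDiff_EDG hG) _

/-- t-derivative of the ε-partial. -/
private lemma hda_DG_t (hG : ContDiff ℝ (⊤ : ℕ∞) (EGm Γ)) (ε t : ℝ) :
    HasDerivAt (fun τ => EDG Γ (ε, τ)) (EddG Γ (ε, t)) t :=
  hasDerivAt_p2 (EDG Γ) ((contDiff_EDG hG).differentiable (by simp)) ε t

/-- Clairaut: ε-derivative of the t-partial is `EddG`. -/
private lemma hda_dG_e (hG : ContDiff ℝ (⊤ : ℕ∞) (EGm Γ)) (ε t : ℝ) :
    HasDerivAt (fun e => EdG Γ (e, t)) (EddG Γ (ε, t)) ε := by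
  have h := hasDerivAt_p1 (EdG Γ) ((contDiff_EdG hG).differentiable (by simp)) ε t
  have : fderiv ℝ (EdG Γ) (ε, t) (1, 0) = EddG Γ (ε, t) := by
    unfold EdG EddG EDG
    exact clairaut (EGm Γ) hG (ε, t)
  rwa [this] at h

/-- The ε-slot derivative of `EPsi` is `EXi`. -/
private lemma fderiv_EPsi_one (hV : ContDiff ℝ (⊤ : ℕ∞) V) (hU : ContDiff ℝ (⊤ : ℕ∞) U)
    (z : ℝ × (E2 × E2)) :
    fderiv ℝ (EPsi V U) z ((1 : ℝ), (0 : E2 × E2)) = EXi U z.2 := by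
  have h1 : HasDerivAt (fun e => EPsi V U (e, z.2))
      (fderiv ℝ (EPsi V U) z ((1 : ℝ), (0 : E2 × E2))) z.1 := by
    have := chainD ((contDiff_EPsi hV hU).differentiable (by simp))
      ((hasDerivAt_id z.1).prodMk (hasDerivAt_const z.1 z.2))
    simpa only [id_eq, Prod.mk.eta] using this
  have h2 : HasDerivAt (fun e => EPsi V U (e, z.2)) (EXi U z.2) z.1 := by
    unfold EPsi EXi
    simpa using ((hasDerivAt_const z.1 (V z.2.1)).add
      ((hasDerivAt_id z.1).mul_const (U z.2.1))).mul_const (‖z.2.2‖ ^ 2)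
  exact h1.unique h2

/-- `EPsi` is affine in the ε-slot. -/
private lemma EPsi_affine (V U : E2 → ℝ) (e : ℝ) (q : E2 × E2) :
    EPsi V U (e, q) = EPsi V U (0, q) + e * EXi U q := by
  unfold EPsi EXi; ring

end Geom2

private def Ef0 (V U : E2 → ℝ) (Γ : ℝ → ℝ → E2) : ℝ × ℝ → ℝ :=
  fun p => EPsi V U (p.1, (Γ p.1 p.2, EdG Γ p))
private def El (U : E2 → ℝ) (Γ : ℝ → ℝ → E2) : ℝ × ℝ → ℝ :=
  fun p => EXi U (Γ p.1 p.2, EdG Γ p)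
private def Ecb (V U : E2 → ℝ) (Γ : ℝ → ℝ → E2) : ℝ × ℝ → ℝ :=
  fun p => fderiv ℝ (EPsi V U) (p.1, (Γ p.1 p.2, EdG Γ p)) ((0:ℝ), (EDG Γ p, EddG Γ p))
private def Eb (V U : E2 → ℝ) (Γ : ℝ → ℝ → E2) : ℝ × ℝ → ℝ :=
  fun p => fderiv ℝ (EPsi V U) (p.1, (Γ p.1 p.2, EdG Γ p))
    ((0:ℝ), (EDG Γ (0, p.2), EddG Γ (0, p.2)))
private def Eh2 (V U : E2 → ℝ) (Γ : ℝ → ℝ → E2) : ℝ × ℝ → ℝ :=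
  fun p => EPsi V U ((0:ℝ), (Γ 0 p.2 + p.1 • EDG Γ (0, p.2), EdG Γ (0, p.2) + p.1 • EddG Γ (0, p.2)))
private def Eh3 (V U : E2 → ℝ) (Γ : ℝ → ℝ → E2) : ℝ × ℝ → ℝ :=
  fun p => fderiv ℝ (Eh2 V U Γ) p (1, 0)

section Geom3
variable {V U : E2 → ℝ} {Γ : ℝ → ℝ → E2}

private lemma contDiff_Ef0 (hV : ContDiff ℝ (⊤ : ℕ∞) V) (hU : ContDiff ℝ (⊤ : ℕ∞) U)
    (hG : ContDiff ℝ (⊤ : ℕ∞) (EGm Γ)) : ContDiff ℝ (⊤ : ℕ∞) (Ef0 V U Γ) :=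
  (contDiff_EPsi hV hU).comp (contDiff_fst.prodMk (hG.prodMk (contDiff_EdG hG)))

private lemma contDiff_El (hU : ContDiff ℝ (⊤ : ℕ∞) U)
    (hG : ContDiff ℝ (⊤ : ℕ∞) (EGm Γ)) : ContDiff ℝ (⊤ : ℕ∞) (El U Γ) :=
  (contDiff_EXi hU).comp (hG.prodMk (contDiff_EdG hG))

private lemma contDiff_Ecb (hV : ContDiff ℝ (⊤ : ℕ∞) V) (hU : ContDiff ℝ (⊤ : ℕ∞) U)
    (hG : ContDiff ℝ (⊤ : ℕ∞) (EGm Γ)) : ContDiff ℝ (⊤ : ℕ∞) (Ecb V U Γ) :=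
  ContDiff.clm_apply
    (((contDiff_EPsi hV hU).fderiv_right (by simp)).comp
      (contDiff_fst.prodMk (hG.prodMk (contDiff_EdG hG))))
    (contDiff_const.prodMk ((contDiff_EDG hG).prodMk (contDiff_EddG hG)))

private lemma contDiff_Eb (hV : ContDiff ℝ (⊤ : ℕ∞) V) (hU : ContDiff ℝ (⊤ : ℕ∞) U)
    (hG : ContDiff ℝ (⊤ : ℕ∞) (EGm Γ)) : ContDiff ℝ (⊤ : ℕ∞) (Eb V U Γ) := by
  have h0 : ContDiff ℝ (⊤ : ℕ∞) (fun p : ℝ × ℝ => ((0:ℝ), p.2)) :=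
    contDiff_const.prodMk contDiff_snd
  exact ContDiff.clm_apply
    (((contDiff_EPsi hV hU).fderiv_right (by simp)).comp
      (contDiff_fst.prodMk (hG.prodMk (contDiff_EdG hG))))
    (contDiff_const.prodMk (((contDiff_EDG hG).comp h0).prodMk ((contDiff_EddG hG).comp h0)))

private lemma contDiff_Eh2 (hV : ContDiff ℝ (⊤ : ℕ∞) V) (hU : ContDiff ℝ (⊤ : ℕ∞) U)
    (hG : ContDiff ℝ (⊤ : ℕ∞) (EGm Γ)) : ContDiff ℝ (⊤ : ℕ∞) (Eh2 V U Γ) := by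
  have h0 : ContDiff ℝ (⊤ : ℕ∞) (fun p : ℝ × ℝ => ((0:ℝ), p.2)) :=
    contDiff_const.prodMk contDiff_snd
  exact (contDiff_EPsi hV hU).comp (contDiff_const.prodMk
    (((hG.comp h0).add (contDiff_fst.smul ((contDiff_EDG hG).comp h0))).prodMk
      (((contDiff_EdG hG).comp h0).add (contDiff_fst.smul ((contDiff_EddG hG).comp h0)))))

private lemma contDiff_Eh3 (hV : ContDiff ℝ (⊤ : ℕ∞) V) (hU : ContDiff ℝ (⊤ : ℕ∞) U)
    (hG : ContDiff ℝ (⊤ : ℕ∞) (EGm Γ)) : ContDiff ℝ (⊤ : ℕ∞) (Eh3 V U Γ) :=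
  contDiff_pd _ (contDiff_Eh2 hV hU hG) _

end Geom3

set_option maxHeartbeats 1000000

/-- **Second order expansion of the energy along a family of critical curves**
(equation (eq:E reduced)): `F(ε) := E_ε(γ_ε)` is twice differentiable at `0` with
`F'(0) = E¹(γ₀)` and `F''(0) = −(d²/ds²)|₀ E⁰(γ₀ + sγ¹)`. -/
theorem energy_second_order_expansion
    (V U : E2 → ℝ) (hV : ContDiff ℝ (⊤ : ℕ∞) V) (hU : ContDiff ℝ (⊤ : ℕ∞) U)
    (a b : E2) (ε₀ : ℝ) (hε₀ : 0 < ε₀)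
    (Γ : ℝ → ℝ → E2) (hΓ : ContDiff ℝ (⊤ : ℕ∞) (fun p : ℝ × ℝ => Γ p.1 p.2))
    (hΓa : ∀ ε ∈ Set.Ioo (-ε₀) ε₀, Γ ε 0 = a)
    (hΓb : ∀ ε ∈ Set.Ioo (-ε₀) ε₀, Γ ε 1 = b)
    (hcrit : ∀ ε ∈ Set.Ioo (-ε₀) ε₀, IsCritical V U ε (Γ ε)) :
    DifferentiableAt ℝ (fun ε => energy V U ε (Γ ε)) 0 ∧
    DifferentiableAt ℝ (deriv (fun ε => energy V U ε (Γ ε))) 0 ∧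
    deriv (fun ε => energy V U ε (Γ ε)) 0 = energy1 U (Γ 0) ∧
    deriv (deriv (fun ε => energy V U ε (Γ ε))) 0 =
      - deriv (deriv (fun s : ℝ =>
          energy V U 0 (fun t => Γ 0 t + s • deriv (fun ε => Γ ε t) 0))) 0 := by
  have hG : ContDiff ℝ (⊤ : ℕ∞) (EGm Γ) := hΓ
  have hΨ : ContDiff ℝ (⊤ : ℕ∞) (EPsi V U) := contDiff_EPsi hV hU
  have hΨd : Differentiable ℝ (EPsi V U) := hΨ.differentiable (by simp)
  have hΞ : ContDiff ℝ (⊤ : ℕ∞) (EXi U) := contDiff_EXi hU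
  have hΞd : Differentiable ℝ (EXi U) := hΞ.differentiable (by simp)
  have hmem0 : (0:ℝ) ∈ Set.Ioo (-ε₀) ε₀ := ⟨neg_lt_zero.2 hε₀, hε₀⟩
  have hIoo : Set.Ioo (-ε₀) ε₀ ∈ 𝓝 (0:ℝ) := isOpen_Ioo.mem_nhds hmem0
  -- endpoint derivatives vanish
  have hδ0 : ∀ ε ∈ Set.Ioo (-ε₀) ε₀, EDG Γ (ε, 0) = 0 := by
    intro ε hε
    have h1 : (fun e => Γ e 0) =ᶠ[𝓝 ε] fun _ => a := by
      filter_upwards [isOpen_Ioo.mem_nhds hε] with x hx using hΓa x hx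
    rw [← (hda_Ge hG ε 0).deriv, h1.deriv_eq, deriv_const]
  have hδ1 : ∀ ε ∈ Set.Ioo (-ε₀) ε₀, EDG Γ (ε, 1) = 0 := by
    intro ε hε
    have h1 : (fun e => Γ e 1) =ᶠ[𝓝 ε] fun _ => b := by
      filter_upwards [isOpen_Ioo.mem_nhds hε] with x hx using hΓb x hx
    rw [← (hda_Ge hG ε 1).deriv, h1.deriv_eq, deriv_const]
  -- reformulated criticality
  have hcrit' : ∀ ε ∈ Set.Ioo (-ε₀) ε₀, ∀ δ : ℝ → E2, ContDiff ℝ (⊤ : ℕ∞) δ → δ 0 = 0 → δ 1 = 0 →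
      (∫ t in (0:ℝ)..1, fderiv ℝ (EPsi V U) (ε, (Γ ε t, EdG Γ (ε, t)))
        ((0:ℝ), (δ t, deriv δ t))) = 0 := by
    intro ε hε δ hδ hδa hδb
    have hδd : Differentiable ℝ δ := hδ.differentiable (by simp)
    have hδ' : ContDiff ℝ (⊤ : ℕ∞) (deriv δ) :=
      (ContinuousLinearMap.apply ℝ E2 (1:ℝ)).contDiff.comp (hδ.fderiv_right (by simp))
    have hk : ContDiff ℝ (⊤ : ℕ∞) (fun p : ℝ × ℝ =>
        EPsi V U (ε, (Γ ε p.2 + p.1 • δ p.2, EdG Γ (ε, p.2) + p.1 • deriv δ p.2))) := by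
      have h0 : ContDiff ℝ (⊤ : ℕ∞) (fun p : ℝ × ℝ => ((ε:ℝ), p.2)) :=
        contDiff_const.prodMk contDiff_snd
      exact hΨ.comp (contDiff_const.prodMk
        (((hG.comp h0).add (contDiff_fst.smul (hδ.comp contDiff_snd))).prodMk
          (((contDiff_EdG hG).comp h0).add (contDiff_fst.smul (hδ'.comp contDiff_snd)))))
    have hEen : (fun s : ℝ => energy V U ε (fun t => Γ ε t + s • δ t))
        = fun s => ∫ t in (0:ℝ)..1,
            EPsi V U (ε, (Γ ε t + s • δ t, EdG Γ (ε, t) + s • deriv δ t)) := by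
      funext s
      unfold energy
      refine intervalIntegral.integral_congr fun t _ => ?_
      have hder : deriv (fun t => Γ ε t + s • δ t) t = EdG Γ (ε, t) + s • deriv δ t :=
        ((hda_Gt hG ε t).add ((hδd t).hasDerivAt.const_smul s)).deriv
      rw [hder]
      rfl
    have h := hasDerivAt_intParam (fun p : ℝ × ℝ =>
      EPsi V U (ε, (Γ ε p.2 + p.1 • δ p.2, EdG Γ (ε, p.2) + p.1 • deriv δ p.2))) hk 0
    have hval : ∀ t : ℝ, fderiv ℝ (fun p : ℝ × ℝ =>
        EPsi V U (ε, (Γ ε p.2 + p.1 • δ p.2, EdG Γ (ε, p.2) + p.1 • deriv δ p.2))) (0, t) (1, 0)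
        = fderiv ℝ (EPsi V U) (ε, (Γ ε t, EdG Γ (ε, t))) ((0:ℝ), (δ t, deriv δ t)) := by
      intro t
      refine (hasDerivAt_p1 _ (hk.differentiable (by simp)) 0 t).unique ?_
      have hc : HasDerivAt (fun s : ℝ =>
          ((ε:ℝ), (Γ ε t + s • δ t, EdG Γ (ε, t) + s • deriv δ t)))
          ((0:ℝ), (δ t, deriv δ t)) 0 := by
        refine (hasDerivAt_const (0:ℝ) ε).prodMk (HasDerivAt.prodMk ?_ ?_)
        · simpa using ((hasDerivAt_id (0:ℝ)).smul_const (δ t)).const_add (Γ ε t)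
        · simpa using ((hasDerivAt_id (0:ℝ)).smul_const (deriv δ t)).const_add (EdG Γ (ε, t))
      have := chainD hΨd hc
      simpa [zero_smul] using this
    rw [intervalIntegral.integral_congr (fun t _ => (hval t).symm)]
    have hcr := hcrit ε hε δ hδ hδa hδb
    rw [hEen, h.deriv] at hcr
    exact hcr
  -- the integral of Ecb vanishes on Ioo
  have hEcb0 : ∀ ε ∈ Set.Ioo (-ε₀) ε₀, (∫ t in (0:ℝ)..1, Ecb V U Γ (ε, t)) = 0 := by
    intro ε hε
    have hδ : ContDiff ℝ (⊤ : ℕ∞) (fun t => EDG Γ (ε, t)) :=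
      (contDiff_EDG hG).comp (contDiff_const.prodMk contDiff_id)
    have hcongr : ∀ t : ℝ, Ecb V U Γ (ε, t)
        = fderiv ℝ (EPsi V U) (ε, (Γ ε t, EdG Γ (ε, t)))
            ((0:ℝ), ((fun t => EDG Γ (ε, t)) t, deriv (fun t => EDG Γ (ε, t)) t)) := by
      intro t
      have : deriv (fun τ => EDG Γ (ε, τ)) t = EddG Γ (ε, t) := (hda_DG_t hG ε t).deriv
      rw [this]
      rfl
    rw [intervalIntegral.integral_congr (fun t _ => hcongr t)]
    exact hcrit' ε hε _ hδ (hδ0 ε hε) (hδ1 ε hε)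
  -- F as a parametric integral
  have hF_eq : (fun ε => energy V U ε (Γ ε)) = fun x => ∫ t in (0:ℝ)..1, Ef0 V U Γ (x, t) := by
    funext x
    unfold energy
    refine intervalIntegral.integral_congr fun t _ => ?_
    rw [(hda_Gt hG x t).deriv]
    rfl
  -- pointwise derivative of the F-integrand
  have hP1 : ∀ ε t : ℝ, fderiv ℝ (Ef0 V U Γ) (ε, t) (1, 0)
      = El U Γ (ε, t) + Ecb V U Γ (ε, t) := by
    intro ε t
    refine (hasDerivAt_p1 _ ((contDiff_Ef0 hV hU hG).differentiable (by simp)) ε t).unique ?_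
    have hc : HasDerivAt (fun e : ℝ => ((e:ℝ), ((Γ e t : E2), EdG Γ (e, t))))
        ((1:ℝ), (EDG Γ (ε, t), EddG Γ (ε, t))) ε :=
      (hasDerivAt_id ε).prodMk ((hda_Ge hG ε t).prodMk (hda_dG_e hG ε t))
    have h := chainD hΨd hc
    have hsplit : ((1:ℝ), ((EDG Γ (ε, t), EddG Γ (ε, t)) : E2 × E2))
        = ((1:ℝ), (0 : E2 × E2)) + ((0:ℝ), (EDG Γ (ε, t), EddG Γ (ε, t))) := by
      simp [Prod.ext_iff]
    rw [hsplit, map_add, fderiv_EPsi_one hV hU] at h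
    exact h
  -- derivative of F everywhere
  have hDF : ∀ ε : ℝ, HasDerivAt (fun e => energy V U e (Γ e))
      ((∫ t in (0:ℝ)..1, El U Γ (ε, t)) + ∫ t in (0:ℝ)..1, Ecb V U Γ (ε, t)) ε := by
    intro ε
    rw [hF_eq]
    have h := hasDerivAt_intParam (Ef0 V U Γ) (contDiff_Ef0 hV hU hG) ε
    have heq : (∫ t in (0:ℝ)..1, fderiv ℝ (Ef0 V U Γ) (ε, t) (1, 0))
        = (∫ t in (0:ℝ)..1, El U Γ (ε, t)) + ∫ t in (0:ℝ)..1, Ecb V U Γ (ε, t) := by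
      rw [intervalIntegral.integral_congr (fun t _ => hP1 ε t)]
      exact intervalIntegral.integral_add
        (((contDiff_El hU hG).continuous.comp (Continuous.prodMk_right ε)).intervalIntegrable 0 1)
        (((contDiff_Ecb hV hU hG).continuous.comp (Continuous.prodMk_right ε)).intervalIntegrable 0 1)
    rwa [heq] at h
  have goal1 : DifferentiableAt ℝ (fun ε => energy V U ε (Γ ε)) 0 := (hDF 0).differentiableAt
  -- deriv F on Ioo
  have hderivF : ∀ ε ∈ Set.Ioo (-ε₀) ε₀, deriv (fun e => energy V U e (Γ e)) ε
      = ∫ t in (0:ℝ)..1, El U Γ (ε, t) := by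
    intro ε hε
    rw [(hDF ε).deriv, hEcb0 ε hε, add_zero]
  -- third goal
  have goal3 : deriv (fun ε => energy V U ε (Γ ε)) 0 = energy1 U (Γ 0) := by
    rw [hderivF 0 hmem0]
    unfold energy1
    refine intervalIntegral.integral_congr fun t _ => ?_
    rw [(hda_Gt hG 0 t).deriv]
    rfl
  -- eventual equality of deriv F with L
  have hev : deriv (fun e => energy V U e (Γ e))
      =ᶠ[𝓝 (0:ℝ)] fun ε => ∫ t in (0:ℝ)..1, El U Γ (ε, t) := by
    filter_upwards [hIoo] with ε hε using hderivF ε hε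
  have hL := hasDerivAt_intParam (El U Γ) (contDiff_El hU hG) 0
  have goal2 : DifferentiableAt ℝ (deriv (fun ε => energy V U ε (Γ ε))) 0 :=
    (hev.differentiableAt_iff).2 hL.differentiableAt
  have hddF : deriv (deriv (fun e => energy V U e (Γ e))) 0
      = ∫ t in (0:ℝ)..1, fderiv ℝ (El U Γ) (0, t) (1, 0) := by
    rw [hev.deriv_eq, hL.deriv]
  -- B ≡ 0 near 0 and its derivative
  have hBzero : ∀ ε ∈ Set.Ioo (-ε₀) ε₀, (∫ t in (0:ℝ)..1, Eb V U Γ (ε, t)) = 0 := by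
    intro ε hε
    have hδ : ContDiff ℝ (⊤ : ℕ∞) (fun t => EDG Γ (0, t)) :=
      (contDiff_EDG hG).comp (contDiff_const.prodMk contDiff_id)
    have hcongr : ∀ t : ℝ, Eb V U Γ (ε, t)
        = fderiv ℝ (EPsi V U) (ε, (Γ ε t, EdG Γ (ε, t)))
            ((0:ℝ), ((fun t => EDG Γ (0, t)) t, deriv (fun t => EDG Γ (0, t)) t)) := by
      intro t
      have : deriv (fun τ => EDG Γ (0, τ)) t = EddG Γ (0, t) := (hda_DG_t hG 0 t).deriv
      rw [this]
      rfl
    rw [intervalIntegral.integral_congr (fun t _ => hcongr t)]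
    exact hcrit' ε hε _ hδ (hδ0 0 hmem0) (hδ1 0 hmem0)
  have hBderiv : (∫ t in (0:ℝ)..1, fderiv ℝ (Eb V U Γ) (0, t) (1, 0)) = 0 := by
    have hBd := hasDerivAt_intParam (Eb V U Γ) (contDiff_Eb hV hU hG) 0
    have hBev : (fun ε => ∫ t in (0:ℝ)..1, Eb V U Γ (ε, t)) =ᶠ[𝓝 (0:ℝ)] fun _ => 0 := by
      filter_upwards [hIoo] with ε hε using hBzero ε hε
    rw [← hBd.deriv, hBev.deriv_eq, deriv_const]
  -- R as parametric integral
  have hReq : (fun s : ℝ => energy V U 0 (fun t => Γ 0 t + s • deriv (fun ε => Γ ε t) 0))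
      = fun s => ∫ t in (0:ℝ)..1, Eh2 V U Γ (s, t) := by
    funext s
    unfold energy
    refine intervalIntegral.integral_congr fun t _ => ?_
    have e1 : (fun t => Γ 0 t + s • deriv (fun ε => Γ ε t) 0)
        = fun t => Γ 0 t + s • EDG Γ (0, t) := by
      funext τ
      rw [(hda_Ge hG 0 τ).deriv]
    rw [e1]
    have e2 : deriv (fun τ => Γ 0 τ + s • EDG Γ (0, τ)) t
        = EdG Γ (0, t) + s • EddG Γ (0, t) :=
      ((hda_Gt hG 0 t).add ((hda_DG_t hG 0 t).const_smul s)).deriv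
    rw [e2]
    rfl
  have hR1 : ∀ s : ℝ, HasDerivAt (fun s => ∫ t in (0:ℝ)..1, Eh2 V U Γ (s, t))
      (∫ t in (0:ℝ)..1, Eh3 V U Γ (s, t)) s := fun s =>
    hasDerivAt_intParam (Eh2 V U Γ) (contDiff_Eh2 hV hU hG) s
  have hderivR : deriv (fun s => ∫ t in (0:ℝ)..1, Eh2 V U Γ (s, t))
      = fun s => ∫ t in (0:ℝ)..1, Eh3 V U Γ (s, t) := funext fun s => (hR1 s).deriv
  have hR2 := hasDerivAt_intParam (Eh3 V U Γ) (contDiff_Eh3 hV hU hG) 0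
  have hddR : deriv (deriv (fun s : ℝ =>
        energy V U 0 (fun t => Γ 0 t + s • deriv (fun ε => Γ ε t) 0))) 0
      = ∫ t in (0:ℝ)..1, fderiv ℝ (Eh3 V U Γ) (0, t) (1, 0) := by
    rw [hReq, hderivR, hR2.deriv]
  -- the key pointwise identity
  have hstar : ∀ t : ℝ, fderiv ℝ (Eb V U Γ) (0, t) (1, 0)
      = fderiv ℝ (El U Γ) (0, t) (1, 0) + fderiv ℝ (Eh3 V U Γ) (0, t) (1, 0) := by
    intro t
    set v2 : E2 × E2 := (EDG Γ (0, t), EddG Γ (0, t)) with hv2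
    set q0 : E2 × E2 := (Γ 0 t, EdG Γ (0, t)) with hq0
    set φ : ℝ × (E2 × E2) → ℝ := fun z => fderiv ℝ (EPsi V U) z ((0:ℝ), v2) with hφdef
    have hφ : ContDiff ℝ (⊤ : ℕ∞) φ := ContDiff.clm_apply (hΨ.fderiv_right (by simp)) contDiff_const
    have hφd : Differentiable ℝ φ := hφ.differentiable (by simp)
    -- (i) LHS
    have hi : fderiv ℝ (Eb V U Γ) (0, t) (1, 0) = fderiv ℝ φ ((0:ℝ), q0) ((1:ℝ), v2) := by
      refine (hasDerivAt_p1 _ ((contDiff_Eb hV hU hG).differentiable (by simp)) 0 t).unique ?_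
      have hc : HasDerivAt (fun e : ℝ => ((e:ℝ), ((Γ e t : E2), EdG Γ (e, t))))
          ((1:ℝ), v2) 0 :=
        (hasDerivAt_id (0:ℝ)).prodMk ((hda_Ge hG 0 t).prodMk (hda_dG_e hG 0 t))
      have := chainD hφd hc
      exact this
    -- (iii) ℓ side
    have hiii : fderiv ℝ (El U Γ) (0, t) (1, 0) = fderiv ℝ (EXi U) q0 v2 := by
      refine (hasDerivAt_p1 _ ((contDiff_El hU hG).differentiable (by simp)) 0 t).unique ?_
      have hc : HasDerivAt (fun e : ℝ => ((Γ e t : E2), EdG Γ (e, t))) v2 0 :=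
        (hda_Ge hG 0 t).prodMk (hda_dG_e hG 0 t)
      exact chainD hΞd hc
    -- (ii) h3 side
    have hii : fderiv ℝ (Eh3 V U Γ) (0, t) (1, 0) = fderiv ℝ φ ((0:ℝ), q0) ((0:ℝ), v2) := by
      have hh₂s : ∀ s : ℝ, fderiv ℝ (Eh2 V U Γ) (s, t) (1, 0)
          = φ ((0:ℝ), (Γ 0 t + s • EDG Γ (0, t), EdG Γ (0, t) + s • EddG Γ (0, t))) := by
        intro s
        refine (hasDerivAt_p1 _ ((contDiff_Eh2 hV hU hG).differentiable (by simp)) s t).unique ?_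
        have hc : HasDerivAt (fun σ : ℝ =>
            ((0:ℝ), (Γ 0 t + σ • EDG Γ (0, t), EdG Γ (0, t) + σ • EddG Γ (0, t))))
            ((0:ℝ), v2) s := by
          refine (hasDerivAt_const s (0:ℝ)).prodMk (HasDerivAt.prodMk ?_ ?_)
          · simpa using ((hasDerivAt_id s).smul_const (EDG Γ (0, t))).const_add (Γ 0 t)
          · simpa using ((hasDerivAt_id s).smul_const (EddG Γ (0, t))).const_add (EdG Γ (0, t))
        exact chainD hΨd hc
      refine (hasDerivAt_p1 _ ((contDiff_Eh3 hV hU hG).differentiable (by simp)) 0 t).unique ?_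
      have hfun : (fun y : ℝ => Eh3 V U Γ (y, t))
          = fun s => φ ((0:ℝ), (Γ 0 t + s • EDG Γ (0, t), EdG Γ (0, t) + s • EddG Γ (0, t))) :=
        funext fun s => hh₂s s
      rw [hfun]
      have hc : HasDerivAt (fun s : ℝ =>
          ((0:ℝ), (Γ 0 t + s • EDG Γ (0, t), EdG Γ (0, t) + s • EddG Γ (0, t))))
          ((0:ℝ), v2) 0 := by
        refine (hasDerivAt_const (0:ℝ) (0:ℝ)).prodMk (HasDerivAt.prodMk ?_ ?_)
        · simpa using ((hasDerivAt_id (0:ℝ)).smul_const (EDG Γ (0, t))).const_add (Γ 0 t)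
        · simpa using ((hasDerivAt_id (0:ℝ)).smul_const (EddG Γ (0, t))).const_add (EdG Γ (0, t))
      have := chainD hφd hc
      simpa [zero_smul] using this
    -- (v) the pure-ε direction of φ
    have hv : fderiv ℝ φ ((0:ℝ), q0) ((1:ℝ), (0 : E2 × E2)) = fderiv ℝ (EXi U) q0 v2 := by
      have hφe : ∀ e : ℝ, φ (e, q0) = φ ((0:ℝ), q0) + e * fderiv ℝ (EXi U) q0 v2 := by
        intro e
        have hc1 : HasDerivAt (fun r : ℝ => q0 + r • v2) v2 0 := by
          simpa using ((hasDerivAt_id (0:ℝ)).smul_const v2).const_add q0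
        have hc : HasDerivAt (fun r : ℝ => ((e:ℝ), q0 + r • v2)) ((0:ℝ), v2) 0 :=
          (hasDerivAt_const (0:ℝ) e).prodMk hc1
        have h1 : HasDerivAt (fun r : ℝ => EPsi V U (e, q0 + r • v2)) (φ (e, q0)) 0 := by
          have := chainD hΨd hc
          simpa [zero_smul] using this
        have h2 : HasDerivAt (fun r : ℝ => EPsi V U (e, q0 + r • v2))
            (φ ((0:ℝ), q0) + e * fderiv ℝ (EXi U) q0 v2) 0 := by
          have e3 : (fun r : ℝ => EPsi V U (e, q0 + r • v2))
              = fun r => EPsi V U ((0:ℝ), q0 + r • v2) + e * EXi U (q0 + r • v2) :=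
            funext fun r => EPsi_affine V U e _
          rw [e3]
          have hc0 : HasDerivAt (fun r : ℝ => ((0:ℝ), q0 + r • v2)) ((0:ℝ), v2) 0 :=
            (hasDerivAt_const (0:ℝ) (0:ℝ)).prodMk hc1
          have hA : HasDerivAt (fun r : ℝ => EPsi V U ((0:ℝ), q0 + r • v2)) (φ ((0:ℝ), q0)) 0 := by
            have := chainD hΨd hc0
            simpa [zero_smul] using this
          have hB : HasDerivAt (fun r : ℝ => EXi U (q0 + r • v2)) (fderiv ℝ (EXi U) q0 v2) 0 := by
            have := chainD hΞd hc1
            simpa [zero_smul] using this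
          exact hA.add (hB.const_mul e)
        exact h1.unique h2
      have hX : HasDerivAt (fun e : ℝ => φ (e, q0))
          (fderiv ℝ φ ((0:ℝ), q0) ((1:ℝ), (0 : E2 × E2))) 0 := by
        have hc : HasDerivAt (fun e : ℝ => ((e:ℝ), q0)) ((1:ℝ), (0 : E2 × E2)) 0 :=
          (hasDerivAt_id (0:ℝ)).prodMk (hasDerivAt_const (0:ℝ) q0)
        have := chainD hφd hc
        simpa only [id_eq] using this
      have hY : HasDerivAt (fun e : ℝ => φ (e, q0)) (fderiv ℝ (EXi U) q0 v2) 0 := by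
        rw [funext hφe]
        simpa using ((hasDerivAt_id (0:ℝ)).mul_const (fderiv ℝ (EXi U) q0 v2)).const_add
          (φ ((0:ℝ), q0))
      exact hX.unique hY
    -- combine
    have hsplit : ((1:ℝ), v2) = ((1:ℝ), (0 : E2 × E2)) + ((0:ℝ), v2) := by
      simp [Prod.ext_iff]
    rw [hi, hsplit, map_add, hv, hiii, hii]
  -- final assembly
  refine ⟨goal1, goal2, goal3, ?_⟩
  rw [hddF, hddR]
  have hint : (∫ t in (0:ℝ)..1, fderiv ℝ (El U Γ) (0, t) (1, 0))
      = (∫ t in (0:ℝ)..1, fderiv ℝ (Eb V U Γ) (0, t) (1, 0))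
        - ∫ t in (0:ℝ)..1, fderiv ℝ (Eh3 V U Γ) (0, t) (1, 0) := by
    have hib : IntervalIntegrable (fun t : ℝ => fderiv ℝ (Eb V U Γ) (0, t) (1, 0))
        MeasureTheory.volume 0 1 := by
      refine Continuous.intervalIntegrable ?_ 0 1
      exact ((contDiff_pd _ (contDiff_Eb hV hU hG) ((1:ℝ), (0:ℝ))).continuous.comp
        (Continuous.prodMk_right (0:ℝ)))
    have hih : IntervalIntegrable (fun t : ℝ => fderiv ℝ (Eh3 V U Γ) (0, t) (1, 0))
        MeasureTheory.volume 0 1 := by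
      refine Continuous.intervalIntegrable ?_ 0 1
      exact ((contDiff_pd _ (contDiff_Eh3 hV hU hG) ((1:ℝ), (0:ℝ))).continuous.comp
        (Continuous.prodMk_right (0:ℝ)))
    rw [← intervalIntegral.integral_sub hib hih]
    refine intervalIntegral.integral_congr fun t _ => ?_
    rw [hstar t]
    ring
  rw [hint, hBderiv]
  ring

end
end

section
/- Comparison of conformal factors sharing a common critical curve: Let U, V : ℝ² → ℝ be smooth with V > 0 everywhere, and let γ : [0,1] → ℝ² be smooth with γ'(t) ≠ 0 for all t. Suppose γ is simultaneously a conformal geodesic for V and a conformal geodesic for U (i.e. γ satisfies both Euler–Lagrange equations). Then there exists c ∈ ℝ such that U(γ(t)) = c·V(γ(t)) for all t ∈ [0,1]. If in addition ∫₀¹ U(γ(t))|γ'(t)|² dt = 0, then c = 0, i.e. U vanishes identically on the image of γ. -/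
noncomputable section

open Set

lemma energy_const_on (W : E2 → ℝ) (hW : ContDiff ℝ (⊤ : ℕ∞) W) (γ : ℝ → E2) (hγ : ContDiff ℝ (⊤ : ℕ∞) γ)
    (hgeo : IsConformalGeodesicOn W γ (Set.Icc 0 1)) :
    ∀ t ∈ Set.Icc (0:ℝ) 1, W (γ t) * ‖deriv γ t‖^2 = W (γ 0) * ‖deriv γ 0‖^2 := by
  have hγd : ContDiff ℝ (⊤ : ℕ∞) (deriv γ) := by
    have h' : ContDiff ℝ (((⊤ : ℕ∞) : WithTop ℕ∞) + 1) γ := by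
      rw [← WithTop.coe_one, ← WithTop.coe_add, top_add]; exact hγ
    exact (contDiff_succ_iff_deriv.mp h').2.2
  have hF : ∀ t : ℝ, W (γ t) * ‖deriv γ t‖^2
      = W (γ t) * (inner ℝ (deriv γ t) (deriv γ t) : ℝ) := by
    intro t; rw [real_inner_self_eq_norm_sq]
  have hder : ∀ t ∈ Set.Icc (0:ℝ) 1,
      HasDerivAt (fun t => W (γ t) * (inner ℝ (deriv γ t) (deriv γ t) : ℝ)) 0 t := by
    intro t ht
    have h1 : HasDerivAt γ (deriv γ t) t := (hγ.differentiable (by simp) t).hasDerivAt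
    have h2 : HasDerivAt (deriv γ) (deriv (deriv γ) t) t :=
      (hγd.differentiable (by simp) t).hasDerivAt
    have hWγ : HasDerivAt (fun t => W (γ t)) (fderiv ℝ W (γ t) (deriv γ t)) t :=
      ((hW.differentiable (by simp) (γ t)).hasFDerivAt).comp_hasDerivAt t h1
    have hsq : HasDerivAt (fun t => (inner ℝ (deriv γ t) (deriv γ t) : ℝ))
        ((inner ℝ (deriv γ t) (deriv (deriv γ) t) : ℝ)
          + (inner ℝ (deriv (deriv γ) t) (deriv γ t) : ℝ)) t := h2.inner ℝ h2
    have hprod := hWγ.mul hsq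
    have hgradW : fderiv ℝ W (γ t) (deriv γ t)
        = (inner ℝ (gradient W (γ t)) (deriv γ t) : ℝ) := by
      rw [gradient, ← InnerProductSpace.toDual_apply_apply, LinearIsometryEquiv.apply_symm_apply]
    have heq := congrArg (fun z : E2 => (inner ℝ z (deriv γ t) : ℝ)) (hgeo t ht)
    simp only [inner_add_left, real_inner_smul_left] at heq
    have hzero : fderiv ℝ W (γ t) (deriv γ t) * (inner ℝ (deriv γ t) (deriv γ t) : ℝ)
        + W (γ t) * ((inner ℝ (deriv γ t) (deriv (deriv γ) t) : ℝ)
          + (inner ℝ (deriv (deriv γ) t) (deriv γ t) : ℝ)) = 0 := by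
      have hc1 : (inner ℝ (gradient W (γ t)) (deriv γ t) : ℝ)
          = (inner ℝ (deriv γ t) (gradient W (γ t)) : ℝ) := real_inner_comm _ _
      have hc2 : (inner ℝ (deriv γ t) (deriv (deriv γ) t) : ℝ)
          = (inner ℝ (deriv (deriv γ) t) (deriv γ t) : ℝ) := real_inner_comm _ _
      have hn : (inner ℝ (deriv γ t) (deriv γ t) : ℝ) = ‖deriv γ t‖^2 :=
        real_inner_self_eq_norm_sq _
      rw [hc1, hn] at heq
      rw [hgradW, hc1, hc2, hn]
      linear_combination (-2) * heq
    exact hzero ▸ hprod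
  have hcont : ContinuousOn (fun t => W (γ t) * (inner ℝ (deriv γ t) (deriv γ t) : ℝ))
      (Set.Icc 0 1) :=
    (((hW.continuous.comp hγ.continuous).mul
      ((continuous_inner).comp (hγd.continuous.prodMk hγd.continuous)))).continuousOn
  intro t ht
  rw [hF t, hF 0]
  exact constant_of_has_deriv_right_zero hcont
    (fun s hs => ((hder s (Set.Ico_subset_Icc_self hs)).hasDerivWithinAt)) t ht

/-- **Comparison of conformal factors sharing a common critical curve**: if a smooth regular
curve is simultaneously a conformal geodesic for `V > 0` and for `U`, then `U∘γ = c·(V∘γ)`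
for some constant `c`; if moreover `∫₀¹ U(γ)|γ'|² dt = 0` then `U` vanishes on the curve. -/
theorem conformal_factor_comparison
    (U V : E2 → ℝ) (hU : ContDiff ℝ (⊤ : ℕ∞) U) (hV : ContDiff ℝ (⊤ : ℕ∞) V) (hVpos : ∀ x, 0 < V x)
    (γ : ℝ → E2) (hγ : ContDiff ℝ (⊤ : ℕ∞) γ) (hreg : ∀ t ∈ Set.Icc (0:ℝ) 1, deriv γ t ≠ 0)
    (hgeoV : IsConformalGeodesicOn V γ (Set.Icc 0 1))
    (hgeoU : IsConformalGeodesicOn U γ (Set.Icc 0 1)) :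
    ∃ c : ℝ, (∀ t ∈ Set.Icc (0:ℝ) 1, U (γ t) = c * V (γ t)) ∧
      ((∫ t in (0:ℝ)..1, U (γ t) * ‖deriv γ t‖^2) = 0 →
        ∀ t ∈ Set.Icc (0:ℝ) 1, U (γ t) = 0) := by
  have hkU := energy_const_on U hU γ hγ hgeoU
  have hkV := energy_const_on V hV γ hγ hgeoV
  set a := U (γ 0) * ‖deriv γ 0‖^2 with ha
  set b := V (γ 0) * ‖deriv γ 0‖^2 with hb
  have h0 : (0:ℝ) ∈ Set.Icc (0:ℝ) 1 := by constructor <;> norm_num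
  have hbpos : 0 < b :=
    mul_pos (hVpos _) (pow_pos (norm_pos_iff.mpr (hreg 0 h0)) 2)
  refine ⟨a / b, ?_, ?_⟩
  · intro t ht
    have hn : (0:ℝ) < ‖deriv γ t‖^2 :=
      pow_pos (norm_pos_iff.mpr (hreg t ht)) 2
    have hVt : V (γ t) * ‖deriv γ t‖^2 = b := hkV t ht
    have hUt : U (γ t) * ‖deriv γ t‖^2 = a := hkU t ht
    field_simp
    rw [← hVt, ← hUt]; ring
  · intro hint t ht
    have : (∫ s in (0:ℝ)..1, U (γ s) * ‖deriv γ s‖^2) = a := by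
      rw [intervalIntegral.integral_congr (g := fun _ => a) ?_]
      · simp
      · intro s hs
        rw [Set.uIcc_of_le (by norm_num)] at hs
        exact hkU s hs
    have ha0 : a = 0 := by rw [← this, hint]
    have hUt : U (γ t) * ‖deriv γ t‖^2 = a := hkU t ht
    have hn : (0:ℝ) < ‖deriv γ t‖^2 :=
      pow_pos (norm_pos_iff.mpr (hreg t ht)) 2
    have := hUt.trans ha0
    exact (mul_eq_zero.mp this).resolve_right (ne_of_gt hn)

end
end

section
/- Existence and uniqueness of the energy splitting parameter for rotational classes (from Lemma A.2, equation (eq:m1m2 rot)): Let f₁, f₂ : ℝ → ℝ be C² and 1-periodic, with μ₁ := min_{[0,1]} f₁ and μ₂ := min_{[0,1]} f₂ satisfying μ₁ + μ₂ > −1, and let m, n be nonzero integers. Then there exists a unique e ∈ (−μ₁, 1 + μ₂) such that |m| ∫₀¹ (e + f₁(x))^{−1/2} dx = |n| ∫₀¹ (1 − e + f₂(x))^{−1/2} dx. -/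
noncomputable section

open Set

namespace EnergyAux

open Filter

/-- The basic integral function. -/
def G (f : ℝ → ℝ) (e : ℝ) : ℝ := ∫ x in (0:ℝ)..1, (Real.sqrt (e + f x))⁻¹

lemma global_min {f : ℝ → ℝ} {μ : ℝ} (hp : ∀ x, f (x + 1) = f x)
    (h : ∀ y ∈ Icc (0:ℝ) 1, μ ≤ f y) : ∀ x, μ ≤ f x := by
  intro x
  have hper : Function.Periodic f 1 := hp
  have hx := hper.sub_int_mul_eq (x := x) ⌊x⌋
  rw [mul_one] at hx
  rw [← hx]
  refine h _ ⟨by linarith [Int.floor_le x], by linarith [Int.lt_floor_add_one x]⟩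

lemma continuousAt_G {f : ℝ → ℝ} {μ : ℝ} (hf : Continuous f) (hmin : ∀ x, μ ≤ f x)
    {e₀ : ℝ} (he₀ : -μ < e₀) : ContinuousAt (G f) e₀ := by
  set c : ℝ := (e₀ + μ) / 2 with hc
  have hc0 : 0 < c := by rw [hc]; linarith
  have hGc : Continuous fun e => ∫ x in (0:ℝ)..1, (Real.sqrt (max (e + f x) c))⁻¹ := by
    apply intervalIntegral.continuous_parametric_intervalIntegral_of_continuous'
    apply Continuous.inv₀
    · exact Real.continuous_sqrt.comp
        ((continuous_fst.add (hf.comp continuous_snd)).max continuous_const)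
    · intro p
      exact (Real.sqrt_pos.2 (lt_of_lt_of_le hc0 (le_max_right _ _))).ne'
  apply hGc.continuousAt.congr
  filter_upwards [Ioi_mem_nhds (show e₀ - c < e₀ by linarith)] with e he
  apply intervalIntegral.integral_congr
  intro x hx
  have hle : c ≤ e + f x := by
    have := hmin x
    have h2c : e₀ + μ = 2 * c := by rw [hc]; ring
    have : e₀ - c + μ = c := by linarith
    have he' : e₀ - c < e := he
    linarith
  simp [max_eq_left hle]

lemma strictAnti_G {f : ℝ → ℝ} {μ : ℝ} (hf : Continuous f) (hmin : ∀ x, μ ≤ f x)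
    {e e' : ℝ} (he : -μ < e) (hee : e < e') : G f e' < G f e := by
  have hpos : ∀ (d : ℝ), -μ < d → ∀ x : ℝ, 0 < d + f x := fun d hd x => by
    have := hmin x; linarith
  have hcont : ∀ (d : ℝ), -μ < d → Continuous fun x => (Real.sqrt (d + f x))⁻¹ := by
    intro d hd
    exact (Real.continuous_sqrt.comp (continuous_const.add hf)).inv₀
      fun x => (Real.sqrt_pos.2 (hpos d hd x)).ne'
  apply intervalIntegral.integral_lt_integral_of_continuousOn_of_le_of_exists_lt zero_lt_one
    ((hcont e' (by linarith)).continuousOn) ((hcont e he).continuousOn)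
  · intro x _
    have h1 : Real.sqrt (e + f x) ≤ Real.sqrt (e' + f x) :=
      Real.sqrt_le_sqrt (by linarith)
    exact inv_anti₀ (Real.sqrt_pos.2 (hpos e he x)) h1
  · refine ⟨0, ⟨le_refl _, zero_le_one⟩, ?_⟩
    have h1 : Real.sqrt (e + f 0) < Real.sqrt (e' + f 0) :=
      Real.sqrt_lt_sqrt (le_of_lt (hpos e he 0)) (by linarith)
    exact inv_strictAnti₀ (Real.sqrt_pos.2 (hpos e he 0)) h1

lemma integral_inv_affine {a b r : ℝ} (ha : 0 < a) (hb : 0 < b) (hr : 0 ≤ r) :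
    ∫ s in (0:ℝ)..r, (a + b * s)⁻¹ = (Real.log (a + b * r) - Real.log a) / b := by
  have hpos : ∀ s ∈ Set.uIcc (0:ℝ) r, 0 < a + b * s := by
    intro s hs
    rw [Set.uIcc_of_le hr] at hs
    nlinarith [hs.1]
  have hderiv : ∀ s ∈ Set.uIcc (0:ℝ) r,
      HasDerivAt (fun u => Real.log (a + b * u) / b) ((a + b * s)⁻¹) s := by
    intro s hs
    have h1 : HasDerivAt (fun u : ℝ => a + b * u) b s := by
      simpa using ((hasDerivAt_id s).const_mul b).const_add a
    have h2 := (h1.log (hpos s hs).ne').div_const b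
    have e : b / (a + b * s) / b = (a + b * s)⁻¹ := by
      rw [div_right_comm, div_self hb.ne', one_div]
    rw [e] at h2; exact h2
  have hint : IntervalIntegrable (fun s => (a + b * s)⁻¹) MeasureTheory.volume 0 r := by
    apply ContinuousOn.intervalIntegrable
    exact ((continuousOn_const.add (continuousOn_const.mul continuousOn_id)).inv₀
      fun s hs => (hpos s hs).ne')
  rw [intervalIntegral.integral_eq_sub_of_hasDerivAt hderiv hint]
  rw [mul_zero, add_zero, sub_div]

lemma tendsto_G_atTop_aux {f : ℝ → ℝ} {μ x₀ L : ℝ} (hf : Continuous f)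
    (hmin : ∀ x, μ ≤ f x) (hx₀0 : 0 ≤ x₀) (hx₀1 : x₀ + 2⁻¹ ≤ 1) (hfx₀ : f x₀ = μ)
    (hL : 0 < L) (hquad : ∀ x ∈ Icc x₀ (x₀ + 2⁻¹), f x ≤ μ + L * (x - x₀) ^ 2) :
    Tendsto (G f) (nhdsWithin (-μ) (Ioi (-μ))) atTop := by
  have hsL : 0 < Real.sqrt L := Real.sqrt_pos.2 hL
  set C : ℝ := Real.log (Real.sqrt L * 2⁻¹) with hC
  set ψ : ℝ → ℝ := fun e => (C - Real.log (Real.sqrt (e + μ))) / Real.sqrt L with hψ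
  -- Step I : pointwise lower bound
  have step1 : ∀ e ∈ Ioi (-μ), ψ e ≤ G f e := by
    intro e he
    rw [mem_Ioi] at he
    have ht : 0 < e + μ := by linarith
    set st : ℝ := Real.sqrt (e + μ) with hst
    have hst0 : 0 < st := Real.sqrt_pos.2 ht
    have hpos : ∀ x : ℝ, 0 < e + f x := fun x => by have := hmin x; linarith
    have hcont : Continuous fun x => (Real.sqrt (e + f x))⁻¹ :=
      (Real.continuous_sqrt.comp (continuous_const.add hf)).inv₀
        fun x => (Real.sqrt_pos.2 (hpos x)).ne'
    -- lower bound for the integrand on J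
    have key : ∀ x ∈ Icc x₀ (x₀ + 2⁻¹),
        (fun u => (st + Real.sqrt L * u)⁻¹) (x - x₀) ≤ (Real.sqrt (e + f x))⁻¹ := by
      intro x hx
      have hs0 : 0 ≤ x - x₀ := by linarith [hx.1]
      have h1 : e + f x ≤ (st + Real.sqrt L * (x - x₀)) ^ 2 := by
        have hq := hquad x hx
        have e1 : st ^ 2 = e + μ := Real.sq_sqrt ht.le
        have e2 : Real.sqrt L ^ 2 = L := Real.sq_sqrt hL.le
        nlinarith [mul_nonneg (mul_nonneg hst0.le (Real.sqrt_nonneg L)) hs0]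
      have h2 : Real.sqrt (e + f x) ≤ st + Real.sqrt L * (x - x₀) := by
        have h3 := Real.sqrt_le_sqrt h1
        rwa [Real.sqrt_sq (by positivity)] at h3
      exact inv_anti₀ (Real.sqrt_pos.2 (hpos x)) h2
    -- integrability
    have hi1 : IntervalIntegrable (fun x => (Real.sqrt (e + f x))⁻¹)
        MeasureTheory.volume 0 x₀ := hcont.intervalIntegrable _ _
    have hi2 : IntervalIntegrable (fun x => (Real.sqrt (e + f x))⁻¹)
        MeasureTheory.volume x₀ (x₀ + 2⁻¹) := hcont.intervalIntegrable _ _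
    have hi3 : IntervalIntegrable (fun x => (Real.sqrt (e + f x))⁻¹)
        MeasureTheory.volume (x₀ + 2⁻¹) 1 := hcont.intervalIntegrable _ _
    have hi23 : IntervalIntegrable (fun x => (Real.sqrt (e + f x))⁻¹)
        MeasureTheory.volume x₀ 1 := hcont.intervalIntegrable _ _
    have hilow : IntervalIntegrable (fun x : ℝ => (fun u => (st + Real.sqrt L * u)⁻¹) (x - x₀))
        MeasureTheory.volume x₀ (x₀ + 2⁻¹) := by
      apply ContinuousOn.intervalIntegrable
      apply ContinuousOn.inv₀
      · fun_prop
      · intro x hx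
        rw [Set.uIcc_of_le (by linarith : x₀ ≤ x₀ + 2⁻¹)] at hx
        have : 0 ≤ x - x₀ := by linarith [hx.1]
        positivity
    -- splitting the integral
    have hsplit : (∫ x in (0:ℝ)..x₀, (Real.sqrt (e + f x))⁻¹)
        + ((∫ x in x₀..(x₀ + 2⁻¹), (Real.sqrt (e + f x))⁻¹)
          + ∫ x in (x₀ + 2⁻¹)..1, (Real.sqrt (e + f x))⁻¹) = G f e := by
      rw [intervalIntegral.integral_add_adjacent_intervals hi2 hi3]
      exact intervalIntegral.integral_add_adjacent_intervals hi1 hi23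
    have hnn1 : 0 ≤ ∫ x in (0:ℝ)..x₀, (Real.sqrt (e + f x))⁻¹ :=
      intervalIntegral.integral_nonneg hx₀0 fun u _ => by positivity
    have hnn3 : 0 ≤ ∫ x in (x₀ + 2⁻¹)..1, (Real.sqrt (e + f x))⁻¹ :=
      intervalIntegral.integral_nonneg (by linarith) fun u _ => by positivity
    have hmono : (∫ x in x₀..(x₀ + 2⁻¹), (fun u => (st + Real.sqrt L * u)⁻¹) (x - x₀))
        ≤ ∫ x in x₀..(x₀ + 2⁻¹), (Real.sqrt (e + f x))⁻¹ :=
      intervalIntegral.integral_mono_on (by linarith) hilow hi2 key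
    have hcomp : (∫ x in x₀..(x₀ + 2⁻¹), (fun u => (st + Real.sqrt L * u)⁻¹) (x - x₀))
        = ∫ s in (0:ℝ)..2⁻¹, (st + Real.sqrt L * s)⁻¹ := by
      rw [intervalIntegral.integral_comp_sub_right (fun u => (st + Real.sqrt L * u)⁻¹) x₀]
      norm_num
    have hval : (∫ s in (0:ℝ)..2⁻¹, (st + Real.sqrt L * s)⁻¹)
        = (Real.log (st + Real.sqrt L * 2⁻¹) - Real.log st) / Real.sqrt L :=
      integral_inv_affine hst0 hsL (by norm_num)
    have hlog : C ≤ Real.log (st + Real.sqrt L * 2⁻¹) := by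
      rw [hC]
      apply Real.log_le_log (by positivity)
      linarith
    rw [hψ]
    simp only
    rw [← hsplit]
    have hB : (C - Real.log st) / Real.sqrt L
        ≤ ∫ x in x₀..(x₀ + 2⁻¹), (Real.sqrt (e + f x))⁻¹ := by
      refine le_trans ?_ hmono
      rw [hcomp, hval]
      gcongr
    linarith
  -- Step II : ψ tends to infinity
  have step2 : Tendsto ψ (nhdsWithin (-μ) (Ioi (-μ))) atTop := by
    have h1 : Tendsto (fun e => e + μ) (nhdsWithin (-μ) (Ioi (-μ)))
        (nhdsWithin 0 (Ioi 0)) := by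
      apply tendsto_nhdsWithin_of_tendsto_nhds_of_eventually_within
      · have : Tendsto (fun e : ℝ => e + μ) (nhds (-μ)) (nhds (-μ + μ)) :=
          (continuous_id.add continuous_const).tendsto _
        rw [neg_add_cancel] at this
        exact this.mono_left nhdsWithin_le_nhds
      · filter_upwards [self_mem_nhdsWithin] with e he
        rw [mem_Ioi] at he ⊢
        linarith
    have h2 : Tendsto Real.sqrt (nhdsWithin 0 (Ioi 0)) (nhdsWithin 0 (Ioi 0)) := by
      apply tendsto_nhdsWithin_of_tendsto_nhds_of_eventually_within
      · have : Tendsto Real.sqrt (nhds 0) (nhds (Real.sqrt 0)) :=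
          Real.continuous_sqrt.tendsto 0
        rw [Real.sqrt_zero] at this
        exact this.mono_left nhdsWithin_le_nhds
      · filter_upwards [self_mem_nhdsWithin] with t ht
        exact Real.sqrt_pos.2 ht
    have h3 : Tendsto (fun e => Real.log (Real.sqrt (e + μ)))
        (nhdsWithin (-μ) (Ioi (-μ))) atBot :=
      Real.tendsto_log_nhdsGT_zero.comp (h2.comp h1)
    have h4 : Tendsto (fun y : ℝ => (C - y) / Real.sqrt L) atBot atTop := by
      apply Tendsto.atTop_div_const hsL
      have := tendsto_atTop_add_const_left atBot C tendsto_neg_atBot_atTop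
      exact this.congr fun y => (sub_eq_add_neg C y).symm
    exact h4.comp h3
  exact tendsto_atTop_mono' _ (by
    filter_upwards [self_mem_nhdsWithin] with e he
    exact step1 e he) step2

lemma exists_quad {f : ℝ → ℝ} {μ : ℝ} (hf : ContDiff ℝ 2 f) (hmin : ∀ x, μ ≤ f x)
    {x₀ : ℝ} (hfx₀ : f x₀ = μ) :
    ∃ L > 0, ∀ x ∈ Icc (x₀ - 1) (x₀ + 1), f x ≤ μ + L * (x - x₀) ^ 2 := by
  have hf2 : ContDiff ℝ (1 + 1) f := by norm_num; exact hf
  obtain ⟨hd1, -, hc1⟩ := contDiff_succ_iff_deriv.mp hf2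
  obtain ⟨hd2, hcont2⟩ := contDiff_one_iff_deriv.mp hc1
  -- the minimum is critical
  have hlm : IsLocalMin f x₀ := Filter.Eventually.of_forall fun y => by
    rw [hfx₀]; exact hmin y
  have hder0 : deriv f x₀ = 0 := hlm.deriv_eq_zero
  -- bound on the second derivative
  obtain ⟨M, hM⟩ := (isCompact_Icc (a := x₀ - 1) (b := x₀ + 1)).exists_bound_of_continuousOn
    hcont2.continuousOn
  set L : ℝ := max M 1 with hLdef
  have hL : 0 < L := lt_of_lt_of_le one_pos (le_max_right _ _)
  refine ⟨L, hL, ?_⟩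
  have hx₀mem : x₀ ∈ Icc (x₀ - 1) (x₀ + 1) := by constructor <;> linarith
  -- first derivative bound
  have hstep1 : ∀ x ∈ Icc (x₀ - 1) (x₀ + 1), ‖deriv f x‖ ≤ L * ‖x - x₀‖ := by
    intro x hx
    have := Convex.norm_image_sub_le_of_norm_deriv_le
      (f := deriv f) (s := Icc (x₀ - 1) (x₀ + 1)) (C := L)
      (fun y _ => hd2 y) (fun y hy => le_trans (hM y hy) (le_max_left _ _))
      (convex_Icc _ _) hx₀mem hx
    rwa [hder0, sub_zero] at this
  intro x hx
  rcases eq_or_ne x x₀ with rfl | hne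
  · simp [hfx₀]
  -- second application of the MVT on the segment between x₀ and x
  have hsub : Set.uIcc x₀ x ⊆ Icc (x₀ - 1) (x₀ + 1) := Set.uIcc_subset_Icc hx₀mem hx
  have habs : ∀ y ∈ Set.uIcc x₀ x, |y - x₀| ≤ |x - x₀| := by
    intro y hy
    rcases Set.mem_uIcc.mp hy with ⟨h1, h2⟩ | ⟨h1, h2⟩ <;>
      (rw [abs_le]; constructor <;>
        [nlinarith [le_abs_self (x - x₀), neg_abs_le (x - x₀), abs_nonneg (x - x₀)];
         nlinarith [le_abs_self (x - x₀), neg_abs_le (x - x₀), abs_nonneg (x - x₀)]])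
  have hstep2 := Convex.norm_image_sub_le_of_norm_deriv_le
    (f := f) (s := Set.uIcc x₀ x) (C := L * |x - x₀|)
    (fun y _ => hd1 y)
    (fun y hy => le_trans (hstep1 y (hsub hy))
      (by
        have := habs y hy
        have h0 : (0:ℝ) ≤ L := hL.le
        simp only [Real.norm_eq_abs]
        nlinarith))
    (convex_uIcc _ _) Set.left_mem_uIcc Set.right_mem_uIcc
  rw [hfx₀] at hstep2
  simp only [Real.norm_eq_abs] at hstep2
  have h1 : f x - μ ≤ |f x - μ| := le_abs_self _
  have h2 : |x - x₀| * |x - x₀| = (x - x₀) ^ 2 := by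
    rw [← abs_mul, abs_of_nonneg (mul_self_nonneg _)]; ring
  have h3 : L * |x - x₀| * |x - x₀| = L * (x - x₀) ^ 2 := by rw [mul_assoc, h2]
  linarith

lemma tendsto_G_atTop {f : ℝ → ℝ} {μ : ℝ} (hf : ContDiff ℝ 2 f)
    (hp : ∀ x, f (x + 1) = f x) (hμ : IsLeast (f '' Icc 0 1) μ) :
    Tendsto (G f) (nhdsWithin (-μ) (Ioi (-μ))) atTop := by
  have hmin : ∀ x, μ ≤ f x := global_min hp fun y hy => hμ.2 ⟨y, hy, rfl⟩
  obtain ⟨x₀, hx₀I, hfx₀⟩ := hμ.1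
  obtain ⟨L, hL, hquad⟩ := exists_quad hf hmin hfx₀
  rcases le_or_gt x₀ 2⁻¹ with hhalf | hhalf
  · exact tendsto_G_atTop_aux hf.continuous hmin hx₀I.1 (by linarith) hfx₀ hL
      (fun x hx => hquad x ⟨by linarith [hx.1], by linarith [hx.2]⟩)
  · -- reflection
    set g : ℝ → ℝ := fun x => f (1 - x) with hg
    have hGfg : G f = G g := by
      funext e
      rw [hg]
      show _ = ∫ x in (0:ℝ)..1, (fun u => (Real.sqrt (e + f u))⁻¹) (1 - x)
      rw [intervalIntegral.integral_comp_sub_left (fun u => (Real.sqrt (e + f u))⁻¹) 1]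
      norm_num [G]
    rw [hGfg]
    have hgc : Continuous g := hf.continuous.comp (continuous_const.sub continuous_id)
    have hgmin : ∀ x, μ ≤ g x := fun x => hmin (1 - x)
    have hgx₀ : g (1 - x₀) = μ := by
      show f (1 - (1 - x₀)) = μ
      rw [sub_sub_cancel, hfx₀]
    apply tendsto_G_atTop_aux hgc hgmin (by linarith [hx₀I.2]) (by linarith) hgx₀ hL
    intro x hx
    have h1 : 1 - x ∈ Icc (x₀ - 1) (x₀ + 1) := ⟨by linarith [hx.2], by linarith [hx.1]⟩
    have := hquad (1 - x) h1
    rw [hg]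
    simp only
    calc f (1 - x) ≤ μ + L * (1 - x - x₀) ^ 2 := this
      _ = μ + L * (x - (1 - x₀)) ^ 2 := by ring

end EnergyAux




open Filter EnergyAux in
/-- **Lemma A.2, equation (eq:m1m2 rot)**: existence and uniqueness of the energy splitting
parameter `e` for rotational homology classes. -/
theorem exists_unique_energy_parameter
    (f₁ f₂ : ℝ → ℝ) (hf₁ : ContDiff ℝ 2 f₁) (hf₂ : ContDiff ℝ 2 f₂)
    (hp₁ : ∀ x : ℝ, f₁ (x + 1) = f₁ x) (hp₂ : ∀ x : ℝ, f₂ (x + 1) = f₂ x)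
    (μ₁ μ₂ : ℝ) (hμ₁ : IsLeast (f₁ '' Set.Icc 0 1) μ₁) (hμ₂ : IsLeast (f₂ '' Set.Icc 0 1) μ₂)
    (hsum : -1 < μ₁ + μ₂)
    (m n : ℤ) (hm : m ≠ 0) (hn : n ≠ 0) :
    ∃! e : ℝ, e ∈ Set.Ioo (-μ₁) (1 + μ₂) ∧
      |(m : ℝ)| * ∫ x in (0:ℝ)..1, (Real.sqrt (e + f₁ x))⁻¹
        = |(n : ℝ)| * ∫ x in (0:ℝ)..1, (Real.sqrt (1 - e + f₂ x))⁻¹ := by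
  have hm' : (0:ℝ) < |(m:ℝ)| := by
    simp only [abs_pos]; exact_mod_cast hm
  have hn' : (0:ℝ) < |(n:ℝ)| := by
    simp only [abs_pos]; exact_mod_cast hn
  have hmin₁ : ∀ x, μ₁ ≤ f₁ x := global_min hp₁ fun y hy => hμ₁.2 ⟨y, hy, rfl⟩
  have hmin₂ : ∀ x, μ₂ ≤ f₂ x := global_min hp₂ fun y hy => hμ₂.2 ⟨y, hy, rfl⟩
  set a : ℝ := -μ₁ with ha
  set b : ℝ := 1 + μ₂ with hb
  have hab : a < b := by rw [ha, hb]; linarith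
  set F : ℝ → ℝ := fun e => |(m:ℝ)| * G f₁ e - |(n:ℝ)| * G f₂ (1 - e) with hF
  -- the target equation is `F e = 0`
  have hFeq : ∀ e : ℝ,
      (|(m : ℝ)| * ∫ x in (0:ℝ)..1, (Real.sqrt (e + f₁ x))⁻¹
        = |(n : ℝ)| * ∫ x in (0:ℝ)..1, (Real.sqrt (1 - e + f₂ x))⁻¹) ↔ F e = 0 := by
    intro e
    rw [hF]
    show _ ↔ |(m:ℝ)| * G f₁ e - |(n:ℝ)| * G f₂ (1 - e) = 0
    rw [G, G]
    constructor <;> intro h <;> linarith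
  -- continuity of F on Ioo a b
  have hFcont : ∀ e ∈ Ioo a b, ContinuousAt F e := by
    intro e he
    have h1 : ContinuousAt (G f₁) e :=
      continuousAt_G hf₁.continuous hmin₁ (by rw [ha] at he; exact he.1)
    have h2 : ContinuousAt (fun e' : ℝ => G f₂ (1 - e')) e := by
      have h3 : ContinuousAt (G f₂) (1 - e) := by
        apply continuousAt_G hf₂.continuous hmin₂
        have := he.2; rw [hb] at this; linarith
      exact h3.comp ((continuous_const.sub continuous_id).continuousAt)
    exact (h1.const_mul _).sub (h2.const_mul _)
  -- strict antitonicity of F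
  have hFanti : ∀ e ∈ Ioo a b, ∀ e' ∈ Ioo a b, e < e' → F e' < F e := by
    intro e he e' he' hlt
    have h1 : G f₁ e' < G f₁ e := strictAnti_G hf₁.continuous hmin₁ he.1 hlt
    have h2 : G f₂ (1 - e) < G f₂ (1 - e') := by
      apply strictAnti_G hf₂.continuous hmin₂
      · have := he'.2; rw [hb] at this; linarith
      · linarith
    rw [hF]
    have := mul_lt_mul_of_pos_left h1 hm'
    have := mul_lt_mul_of_pos_left h2 hn'
    simp only
    linarith
  set emid : ℝ := (a + b) / 2 with hemid
  have hemidmem : emid ∈ Ioo a b := ⟨by rw [hemid]; linarith, by rw [hemid]; linarith⟩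
  -- F tends to +∞ at a from the right
  have hFtop : Tendsto F (nhdsWithin a (Ioi a)) atTop := by
    have hG1 : Tendsto (G f₁) (nhdsWithin a (Ioi a)) atTop := by
      rw [ha]; exact tendsto_G_atTop hf₁ hp₁ hμ₁
    have hmain : Tendsto (fun e => |(m:ℝ)| * G f₁ e - |(n:ℝ)| * G f₂ (1 - emid))
        (nhdsWithin a (Ioi a)) atTop := by
      have := (hG1.const_mul_atTop hm')
      have h2 := tendsto_atTop_add_const_right (nhdsWithin a (Ioi a))
        (-(|(n:ℝ)| * G f₂ (1 - emid))) this
      simpa [sub_eq_add_neg] using h2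
    apply tendsto_atTop_mono' _ ?_ hmain
    filter_upwards [Ioo_mem_nhdsGT_of_mem ⟨le_refl a, hemidmem.1⟩] with e he
    have hle : G f₂ (1 - e) ≤ G f₂ (1 - emid) := by
      rcases eq_or_lt_of_le (le_of_lt he.2) with heq | hlt
      · rw [heq]
      · apply le_of_lt
        apply strictAnti_G hf₂.continuous hmin₂
        · have := hemidmem.2; rw [hb] at this; linarith
        · linarith
    rw [hF]
    simp only
    nlinarith
  -- F tends to -∞ at b from the left
  have hFbot : Tendsto F (nhdsWithin b (Iio b)) atBot := by
    have hcomp : Tendsto (fun e : ℝ => 1 - e) (nhdsWithin b (Iio b))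
        (nhdsWithin (-μ₂) (Ioi (-μ₂))) := by
      apply tendsto_nhdsWithin_of_tendsto_nhds_of_eventually_within
      · have h1 : Tendsto (fun e : ℝ => 1 - e) (nhds b) (nhds (1 - b)) :=
          (continuous_const.sub continuous_id).tendsto b
        have h2 : 1 - b = -μ₂ := by rw [hb]; ring
        rw [h2] at h1
        exact h1.mono_left nhdsWithin_le_nhds
      · filter_upwards [self_mem_nhdsWithin] with e he
        have : e < b := he
        rw [mem_Ioi]
        rw [hb] at this
        linarith
    have hG2 : Tendsto (fun e => G f₂ (1 - e)) (nhdsWithin b (Iio b)) atTop :=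
      (tendsto_G_atTop hf₂ hp₂ hμ₂).comp hcomp
    have hmain : Tendsto (fun e => |(m:ℝ)| * G f₁ emid - |(n:ℝ)| * G f₂ (1 - e))
        (nhdsWithin b (Iio b)) atBot := by
      have h1 := hG2.const_mul_atTop hn'
      have h2 : Tendsto (fun e => -(|(n:ℝ)| * G f₂ (1 - e)))
          (nhdsWithin b (Iio b)) atBot := tendsto_neg_atTop_atBot.comp h1
      have h3 := tendsto_atBot_add_const_left (nhdsWithin b (Iio b))
        (|(m:ℝ)| * G f₁ emid) h2
      simpa [sub_eq_add_neg] using h3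
    apply tendsto_atBot_mono' _ ?_ hmain
    filter_upwards [Ioo_mem_nhdsLT_of_mem ⟨hemidmem.2, le_refl b⟩] with e he
    have hle : G f₁ e ≤ G f₁ emid := by
      apply le_of_lt
      apply strictAnti_G hf₁.continuous hmin₁
      · exact hemidmem.1
      · exact he.1
    rw [hF]
    simp only
    nlinarith
  -- pick points where F is positive / negative
  obtain ⟨e₁, he₁pos, he₁mem⟩ :=
    ((hFtop.eventually_gt_atTop 0).and (Ioo_mem_nhdsGT_of_mem ⟨le_refl a, hab⟩)).exists
  obtain ⟨e₂, he₂neg, he₂mem⟩ :=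
    ((hFbot.eventually_lt_atBot 0).and (Ioo_mem_nhdsLT_of_mem ⟨hab, le_refl b⟩)).exists
  have he₁₂ : e₁ < e₂ := by
    rcases lt_trichotomy e₁ e₂ with h | h | h
    · exact h
    · exfalso; rw [h] at he₁pos; linarith
    · exfalso
      have := hFanti e₂ he₂mem e₁ he₁mem h
      linarith
  have hsubIcc : Icc e₁ e₂ ⊆ Ioo a b := fun x hx =>
    ⟨lt_of_lt_of_le he₁mem.1 hx.1, lt_of_le_of_lt hx.2 he₂mem.2⟩
  have hFconOn : ContinuousOn F (Icc e₁ e₂) := fun x hx =>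
    (hFcont x (hsubIcc hx)).continuousWithinAt
  have hivt := intermediate_value_Icc' (le_of_lt he₁₂) hFconOn
  have h0mem : (0:ℝ) ∈ Icc (F e₂) (F e₁) := ⟨le_of_lt he₂neg, le_of_lt he₁pos⟩
  obtain ⟨e₀, he₀mem, hFe₀⟩ := hivt h0mem
  have he₀Ioo : e₀ ∈ Ioo a b := hsubIcc he₀mem
  refine ⟨e₀, ⟨he₀Ioo, (hFeq e₀).mpr hFe₀⟩, ?_⟩
  intro e' ⟨he'Ioo, he'eq⟩
  have hFe' : F e' = 0 := (hFeq e').mp he'eq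
  rcases lt_trichotomy e' e₀ with h | h | h
  · exfalso
    have := hFanti e' he'Ioo e₀ he₀Ioo h
    rw [hFe₀, hFe'] at this
    exact lt_irrefl 0 this
  · exact h
  · exfalso
    have := hFanti e₀ he₀Ioo e' he'Ioo h
    rw [hFe₀, hFe'] at this
    exact lt_irrefl 0 this


end
end

section
/- Length of rotational geodesics of Liouville metrics (equation (eq:rot length) of Lemma A.2): Let f₁, f₂ : ℝ → ℝ be continuous and 1-periodic, let e ∈ ℝ, T > 0, and let m₁, m₂ be positive integers. Let x₁, x₂ : [0,T] → ℝ be C¹ with e + f₁(x₁(t)) > 0, 1 − e + f₂(x₂(t)) > 0, x₁'(t) = √(2(e + f₁(x₁(t)))), and x₂'(t) = √(2(1 − e + f₂(x₂(t)))) for all t ∈ [0,T], and with x₁(T) = x₁(0) + m₁ and x₂(T) = x₂(0) + m₂. Then, with W(y₁,y₂) := 1 + f₁(y₁) + f₂(y₂) and γ(t) := (x₁(t), x₂(t)), the Riemannian length ∫₀ᵀ √(W(γ(t)))·|γ'(t)| dt equals m₁ ∫₀¹ √(e + f₁(u)) du + m₂ ∫₀¹ √(1 − e + f₂(u)) du.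 -/
noncomputable section

open Set

lemma sqrt_two_mul_mul (a : ℝ) (ha : 0 ≤ a) :
    Real.sqrt (2 * a) * Real.sqrt a = Real.sqrt 2 * a := by
  rw [Real.sqrt_mul (by norm_num : (0:ℝ) ≤ 2), mul_assoc, Real.mul_self_sqrt ha]

lemma norm_vec2 (a b : ℝ) : ‖vec2 a b‖ = Real.sqrt (a ^ 2 + b ^ 2) := by
  rw [EuclideanSpace.norm_eq]
  simp [vec2, Fin.sum_univ_two, Real.norm_eq_abs, sq_abs]

lemma hasDerivAt_vec2 {x₁ x₂ : ℝ → ℝ} {d₁ d₂ : ℝ} (t : ℝ)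
    (h₁ : HasDerivAt x₁ d₁ t) (h₂ : HasDerivAt x₂ d₂ t) :
    HasDerivAt (fun u => vec2 (x₁ u) (x₂ u)) (vec2 d₁ d₂) t := by
  have hpi : HasDerivAt (fun u => ![x₁ u, x₂ u]) ![d₁, d₂] t := by
    rw [hasDerivAt_pi]
    intro i
    fin_cases i <;> simpa
  exact ((EuclideanSpace.equiv (Fin 2) ℝ).symm.toContinuousLinearMap.hasFDerivAt.comp_hasDerivAt
    t hpi : _)

/-- **Length of rotational geodesics of Liouville metrics** (equation (eq:rot length) of
Lemma A.2): the Riemannian length of a Maupertuis-parametrized geodesic of homology class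
`(m₁,m₂)` equals `m₁∫₀¹√(e+f₁) + m₂∫₀¹√(1−e+f₂)`. -/
theorem rotational_geodesic_length
    (f₁ f₂ : ℝ → ℝ) (hf₁ : Continuous f₁) (hf₂ : Continuous f₂)
    (hp₁ : ∀ u : ℝ, f₁ (u + 1) = f₁ u) (hp₂ : ∀ u : ℝ, f₂ (u + 1) = f₂ u)
    (e T : ℝ) (hT : 0 < T) (m₁ m₂ : ℕ) (hm₁ : 0 < m₁) (hm₂ : 0 < m₂)
    (x₁ x₂ : ℝ → ℝ)
    (hpos₁ : ∀ t ∈ Set.Icc 0 T, 0 < e + f₁ (x₁ t))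
    (hpos₂ : ∀ t ∈ Set.Icc 0 T, 0 < 1 - e + f₂ (x₂ t))
    (hode₁ : ∀ t ∈ Set.Icc 0 T, HasDerivAt x₁ (Real.sqrt (2 * (e + f₁ (x₁ t)))) t)
    (hode₂ : ∀ t ∈ Set.Icc 0 T, HasDerivAt x₂ (Real.sqrt (2 * (1 - e + f₂ (x₂ t)))) t)
    (hx₁T : x₁ T = x₁ 0 + m₁) (hx₂T : x₂ T = x₂ 0 + m₂) :
    (∫ t in (0:ℝ)..T,
        Real.sqrt (1 + f₁ (x₁ t) + f₂ (x₂ t)) * ‖deriv (fun u => vec2 (x₁ u) (x₂ u)) t‖)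
      = (m₁ : ℝ) * (∫ u in (0:ℝ)..1, Real.sqrt (e + f₁ u))
        + (m₂ : ℝ) * ∫ u in (0:ℝ)..1, Real.sqrt (1 - e + f₂ u) := by
  set g₁ : ℝ → ℝ := fun u => Real.sqrt (e + f₁ u) with hg₁
  set g₂ : ℝ → ℝ := fun u => Real.sqrt (1 - e + f₂ u) with hg₂
  have hcg₁ : Continuous g₁ := Real.continuous_sqrt.comp (continuous_const.add hf₁)
  have hcg₂ : Continuous g₂ := Real.continuous_sqrt.comp (continuous_const.add hf₂)
  have huIcc : Set.uIcc (0:ℝ) T = Set.Icc 0 T := Set.uIcc_of_le hT.le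
  have hcx₁ : ContinuousOn x₁ (Set.Icc 0 T) :=
    fun t ht => (hode₁ t ht).continuousAt.continuousWithinAt
  have hcx₂ : ContinuousOn x₂ (Set.Icc 0 T) :=
    fun t ht => (hode₂ t ht).continuousAt.continuousWithinAt
  have hd₁ : ContinuousOn (fun t => Real.sqrt (2 * (e + f₁ (x₁ t)))) (Set.Icc 0 T) :=
    (Real.continuous_sqrt.comp (continuous_const.mul (continuous_const.add hf₁))).comp_continuousOn
      hcx₁
  have hd₂ : ContinuousOn (fun t => Real.sqrt (2 * (1 - e + f₂ (x₂ t)))) (Set.Icc 0 T) :=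
    (Real.continuous_sqrt.comp (continuous_const.mul (continuous_const.add hf₂))).comp_continuousOn
      hcx₂
  -- pointwise identity for the integrand
  have hpt : ∀ t ∈ Set.Icc (0:ℝ) T,
      Real.sqrt (1 + f₁ (x₁ t) + f₂ (x₂ t)) * ‖deriv (fun u => vec2 (x₁ u) (x₂ u)) t‖
      = Real.sqrt (2 * (e + f₁ (x₁ t))) • (g₁ ∘ x₁) t
        + Real.sqrt (2 * (1 - e + f₂ (x₂ t))) • (g₂ ∘ x₂) t := by
    intro t ht
    have hda := hasDerivAt_vec2 t (hode₁ t ht) (hode₂ t ht)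
    rw [hda.deriv, norm_vec2]
    set a := e + f₁ (x₁ t) with ha
    set b := 1 - e + f₂ (x₂ t) with hb
    have hA : 0 < a := hpos₁ t ht
    have hB : 0 < b := hpos₂ t ht
    have h1 : Real.sqrt (2 * a) ^ 2 = 2 * a := Real.sq_sqrt (by positivity)
    have h2 : Real.sqrt (2 * b) ^ 2 = 2 * b := Real.sq_sqrt (by positivity)
    have hW : 1 + f₁ (x₁ t) + f₂ (x₂ t) = a + b := by rw [ha, hb]; ring
    rw [h1, h2, hW, smul_eq_mul, smul_eq_mul, Function.comp_apply, Function.comp_apply]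
    show Real.sqrt (a+b) * Real.sqrt (2*a+2*b)
      = Real.sqrt (2*a) * Real.sqrt a + Real.sqrt (2*b) * Real.sqrt b
    have h3 : 2 * a + 2 * b = 2 * (a + b) := by ring
    rw [h3, mul_comm (Real.sqrt (a + b)), sqrt_two_mul_mul (a + b) (by positivity),
      sqrt_two_mul_mul a hA.le, sqrt_two_mul_mul b hB.le, mul_add]
  rw [intervalIntegral.integral_congr (g := fun t =>
      Real.sqrt (2 * (e + f₁ (x₁ t))) • (g₁ ∘ x₁) t
        + Real.sqrt (2 * (1 - e + f₂ (x₂ t))) • (g₂ ∘ x₂) t)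
      (by rw [huIcc]; exact fun t ht => hpt t ht)]
  have hi₁ : IntervalIntegrable (fun t => Real.sqrt (2 * (e + f₁ (x₁ t))) • (g₁ ∘ x₁) t)
      MeasureTheory.volume 0 T := by
    apply ContinuousOn.intervalIntegrable
    rw [huIcc]
    exact hd₁.smul (hcg₁.comp_continuousOn hcx₁)
  have hi₂ : IntervalIntegrable (fun t => Real.sqrt (2 * (1 - e + f₂ (x₂ t))) • (g₂ ∘ x₂) t)
      MeasureTheory.volume 0 T := by
    apply ContinuousOn.intervalIntegrable
    rw [huIcc]
    exact hd₂.smul (hcg₂.comp_continuousOn hcx₂)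
  rw [intervalIntegral.integral_add hi₁ hi₂]
  have hper₁ : Function.Periodic g₁ 1 := fun u => by simp [hg₁, hp₁ u]
  have hper₂ : Function.Periodic g₂ 1 := fun u => by simp [hg₂, hp₂ u]
  have hcv₁ : (∫ t in (0:ℝ)..T, Real.sqrt (2 * (e + f₁ (x₁ t))) • (g₁ ∘ x₁) t)
      = ∫ u in (x₁ 0)..(x₁ T), g₁ u := by
    apply intervalIntegral.integral_comp_smul_deriv
    · rw [huIcc]; exact hode₁
    · rw [huIcc]; exact hd₁
    · exact hcg₁
  have hcv₂ : (∫ t in (0:ℝ)..T, Real.sqrt (2 * (1 - e + f₂ (x₂ t))) • (g₂ ∘ x₂) t)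
      = ∫ u in (x₂ 0)..(x₂ T), g₂ u := by
    apply intervalIntegral.integral_comp_smul_deriv
    · rw [huIcc]; exact hode₂
    · rw [huIcc]; exact hd₂
    · exact hcg₂
  rw [hcv₁, hcv₂, hx₁T, hx₂T]
  have hint₁ : ∀ t₁ t₂ : ℝ, IntervalIntegrable g₁ MeasureTheory.volume t₁ t₂ :=
    fun t₁ t₂ => hcg₁.intervalIntegrable t₁ t₂
  have hint₂ : ∀ t₁ t₂ : ℝ, IntervalIntegrable g₂ MeasureTheory.volume t₁ t₂ :=
    fun t₁ t₂ => hcg₂.intervalIntegrable t₁ t₂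
  have e₁ : (∫ u in (x₁ 0)..(x₁ 0 + (m₁ : ℝ)), g₁ u) = (m₁ : ℝ) * ∫ u in (0:ℝ)..1, g₁ u := by
    have := hper₁.intervalIntegral_add_zsmul_eq (m₁ : ℤ) (x₁ 0) hint₁
    simp only [zsmul_eq_mul, Int.cast_natCast, smul_eq_mul, mul_one] at this
    rw [this, hper₁.intervalIntegral_add_eq (x₁ 0) 0, zero_add]
  have e₂ : (∫ u in (x₂ 0)..(x₂ 0 + (m₂ : ℝ)), g₂ u) = (m₂ : ℝ) * ∫ u in (0:ℝ)..1, g₂ u := by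
    have := hper₂.intervalIntegral_add_zsmul_eq (m₂ : ℤ) (x₂ 0) hint₂
    simp only [zsmul_eq_mul, Int.cast_natCast, smul_eq_mul, mul_one] at this
    rw [this, hper₂.intervalIntegral_add_eq (x₂ 0) 0, zero_add]
  rw [e₁, e₂]


end
end
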